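/- arXiv:math/0607691 — 7 statements merged into one kernel-verified Lean document; each statement's English description precedes it below -/
import Mathlib

section
/- Let Γ be a grid diagram of size n and let x, y be generators given by permutations σ, τ of ZMod n. If there are exactly two elements b ∈ ZMod n with σ(b) ≠ τ(b), then the set R_{x,y} contains exactly two rectangles; in every other case (including x = y) R_{x,y} is empty. -/
open Finset

/-- A grid diagram of size `n`: permutations `O` (white dots) and `X` (black dots)
of `ZMod n`, with `O b ≠ X b` in every row `b`. The cell `C(a,b)` in column `a` and
row `b` contains a white dot iff `a = O b` and a black dot iff `a = X b`. -/
structure GridDiagram (n : ℕ) where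
  O : Equiv.Perm (ZMod n)
  X : Equiv.Perm (ZMod n)
  ne : ∀ b, O b ≠ X b

variable {n : ℕ}

/-- Indicator function (with values in `ℤ`) of the point set
`{(σ b, b)}` of the generator given by the permutation `σ`. -/
def genInd (σ : Equiv.Perm (ZMod n)) (p : ZMod n × ZMod n) : ℤ :=
  if σ p.2 = p.1 then 1 else 0

/-- The mixed difference `δD` of a 2-chain `D` at a lattice point. -/
def mixedDiff (D : ZMod n × ZMod n → ℤ) (p : ZMod n × ZMod n) : ℤ :=
  D p - D (p.1 - 1, p.2) - D (p.1, p.2 - 1) + D (p.1 - 1, p.2 - 1)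

/-- The 2-chain `D` connects the generator `σ` to the generator `τ`. -/
abbrev Connects (D : ZMod n × ZMod n → ℤ) (σ τ : Equiv.Perm (ZMod n)) : Prop :=
  ∀ p, mixedDiff D p = genInd σ p - genInd τ p

/-- Local multiplicity `p_p(D)` of a 2-chain at a lattice point. -/
def locMult (D : ZMod n × ZMod n → ℤ) (p : ZMod n × ZMod n) : ℚ :=
  (D p + D (p.1 - 1, p.2) + D (p.1, p.2 - 1) + D (p.1 - 1, p.2 - 1)) / 4

/-- `P_x(D)`: total local multiplicity of `D` along the generator `σ`. -/
def Pgen [NeZero n] (σ : Equiv.Perm (ZMod n)) (D : ZMod n × ZMod n → ℤ) : ℚ :=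
  ∑ b : ZMod n, locMult D (σ b, b)

/-- `W(D)`: total multiplicity of `D` at the white dots. -/
def Wmult [NeZero n] (Γ : GridDiagram n) (D : ZMod n × ZMod n → ℤ) : ℤ :=
  ∑ b : ZMod n, D (Γ.O b, b)

/-- `B(D)`: total multiplicity of `D` at the black dots. -/
def Bmult [NeZero n] (Γ : GridDiagram n) (D : ZMod n × ZMod n → ℤ) : ℤ :=
  ∑ b : ZMod n, D (Γ.X b, b)

/-- Membership in the cyclic interval `[a₁, a₂) ⊆ ZMod n`. -/
abbrev inCyc (a₁ a₂ a : ZMod n) : Prop := (a - a₁).val < (a₂ - a₁).val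

/-- A quadruple `((a₁,a₂),(b₁,b₂))` determines a rectangle when both cyclic
intervals `[a₁,a₂)`, `[b₁,b₂)` are proper and nonempty. -/
abbrev IsRect (q : (ZMod n × ZMod n) × ZMod n × ZMod n) : Prop :=
  q.1.1 ≠ q.1.2 ∧ q.2.1 ≠ q.2.2

/-- Indicator 2-chain of the rectangle with column interval `[a₁,a₂)` and
row interval `[b₁,b₂)`. -/
def rectInd (q : (ZMod n × ZMod n) × ZMod n × ZMod n) (p : ZMod n × ZMod n) : ℤ :=
  if inCyc q.1.1 q.1.2 p.1 ∧ inCyc q.2.1 q.2.2 p.2 then 1 else 0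

/-- The rectangle determined by a quadruple, as its set of cells. -/
def rectCells [NeZero n] (q : (ZMod n × ZMod n) × ZMod n × ZMod n) :
    Finset (ZMod n × ZMod n) :=
  univ.filter fun p => inCyc q.1.1 q.1.2 p.1 ∧ inCyc q.2.1 q.2.2 p.2

/-- `q` determines an empty rectangle in `R_{σ,τ}`: a rectangle whose indicator
2-chain connects `σ` to `τ`, with `W(1_r) = B(1_r) = 0` and
`P_σ(1_r) + P_τ(1_r) = 1`. -/
abbrev EmptyRect [NeZero n] (Γ : GridDiagram n) (σ τ : Equiv.Perm (ZMod n))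
    (q : (ZMod n × ZMod n) × ZMod n × ZMod n) : Prop :=
  IsRect q ∧ Connects (rectInd q) σ τ ∧ Wmult Γ (rectInd q) = 0 ∧
    Bmult Γ (rectInd q) = 0 ∧ Pgen σ (rectInd q) + Pgen τ (rectInd q) = 1

/-- The number of empty rectangles in `R_{σ,τ}`. -/
def emptyRectCount [NeZero n] (Γ : GridDiagram n) (σ τ : Equiv.Perm (ZMod n)) : ℕ :=
  (univ.filter fun q : (ZMod n × ZMod n) × ZMod n × ZMod n => EmptyRect Γ σ τ q).card

/-- The differential `∂` on `C(Γ)`, the `𝔽₂`-vector space freely generated by the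
generators (elements of which are recorded as functions from generators to `ℤ/2`):
on a generator `x`, `∂x = Σ_y Σ_{empty rectangles r ∈ R_{x,y}} y`. -/
def delC [NeZero n] (Γ : GridDiagram n) (c : Equiv.Perm (ZMod n) → ZMod 2) :
    Equiv.Perm (ZMod n) → ZMod 2 :=
  fun τ => ∑ σ : Equiv.Perm (ZMod n), c σ * (emptyRectCount Γ σ τ : ZMod 2)

/-- Minus the winding number of the oriented link diagram around the lattice
point `p`, computed column by column using the representatives `{0, …, n-1}`. -/
def windA [NeZero n] (Γ : GridDiagram n) (p : ZMod n × ZMod n) : ℤ :=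
  ∑ j ∈ Finset.range p.1.val,
    (if (Γ.X.symm (j : ZMod n)).val < (Γ.O.symm (j : ZMod n)).val then (1 : ℤ) else -1) *
      (if min (Γ.X.symm (j : ZMod n)).val (Γ.O.symm (j : ZMod n)).val < p.2.val ∧
          p.2.val ≤ max (Γ.X.symm (j : ZMod n)).val (Γ.O.symm (j : ZMod n)).val
        then 1 else 0)

/-- Sum of the values of `a = windA` at the four corners of the cell `C(c)`. -/
def cornerA [NeZero n] (Γ : GridDiagram n) (c : ZMod n × ZMod n) : ℤ :=
  windA Γ c + windA Γ (c.1 + 1, c.2) + windA Γ (c.1, c.2 + 1) +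
    windA Γ (c.1 + 1, c.2 + 1)

/-- The Alexander grading
`A(x) = Σ_{p ∈ x} a(p) − (1/8)·Σ_{i,j} a(c_{i,j}) − (n−1)/2`. -/
def alexQ [NeZero n] (Γ : GridDiagram n) (σ : Equiv.Perm (ZMod n)) : ℚ :=
  ((∑ b : ZMod n, windA Γ (σ b, b) : ℤ) : ℚ) -
    (1 / 8 : ℚ) * ((∑ b : ZMod n, (cornerA Γ (Γ.O b, b) + cornerA Γ (Γ.X b, b)) : ℤ) : ℚ) -
    ((n : ℚ) - 1) / 2

/-- The differential `∂` on `C(Γ)` as a linear endomorphism over `𝔽₂ = ZMod 2`. -/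
def delL [NeZero n] (Γ : GridDiagram n) :
    (Equiv.Perm (ZMod n) → ZMod 2) →ₗ[ZMod 2] (Equiv.Perm (ZMod n) → ZMod 2) where
  toFun := delC Γ
  map_add' c₁ c₂ := by
    funext τ
    simp [delC, add_mul, Finset.sum_add_distrib]
  map_smul' m c := by
    funext τ
    simp [delC, Finset.mul_sum, mul_assoc]

/-- The dimension over `𝔽₂` of the homology `ker ∂ / im ∂` of `(C(Γ), ∂)`. -/
noncomputable def homDim [NeZero n] (Γ : GridDiagram n) : ℕ :=
  Module.finrank (ZMod 2)
    (LinearMap.ker (delL Γ) ⧸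
      Submodule.comap (LinearMap.ker (delL Γ)).subtype (LinearMap.range (delL Γ)))

/-- The subspace of `C(Γ)` spanned by the generators of Alexander grading `s`. -/
def gradedSub [NeZero n] (Γ : GridDiagram n) (s : ℚ) :
    Submodule (ZMod 2) (Equiv.Perm (ZMod n) → ZMod 2) where
  carrier := {c | ∀ σ, alexQ Γ σ ≠ s → c σ = 0}
  add_mem' := by
    intro c d hc hd σ hs
    simp [hc σ hs, hd σ hs]
  zero_mem' := by intro σ _; rfl
  smul_mem' := by
    intro m c hc σ hs
    simp [hc σ hs]

/-- The dimension over `𝔽₂` of the homology of `(C(Γ), ∂)` in Alexander grading `s`. -/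
noncomputable def gradedHomDim [NeZero n] (Γ : GridDiagram n) (s : ℚ) : ℕ :=
  Module.finrank (ZMod 2)
    (↥(LinearMap.ker (delL Γ) ⊓ gradedSub Γ s) ⧸
      Submodule.comap (LinearMap.ker (delL Γ) ⊓ gradedSub Γ s).subtype
        (Submodule.map (delL Γ) (gradedSub Γ s)))

/-- The monomial `U₁^{O₁(r)} ⋯ Uₙ^{Oₙ(r)}` attached to a rectangle, where
`O_i(r)` is the multiplicity of the rectangle at the white dot in row `i`. -/
noncomputable def rectU [NeZero n] (Γ : GridDiagram n) (q : (ZMod n × ZMod n) × ZMod n × ZMod n) :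
    MvPolynomial (ZMod n) (ZMod 2) :=
  ∏ i : ZMod n, MvPolynomial.X i ^ (rectInd q (Γ.O i, i)).toNat

/-- The differential `∂⁻` on `C⁻(Γ)`, the free `𝔽₂[U₁,…,Uₙ]`-module on the generators:
`∂⁻x = Σ_y Σ_{r ∈ R_{x,y}, P_x(1_r)+P_y(1_r)=1} U₁^{O₁(r)} ⋯ Uₙ^{Oₙ(r)} · y`. -/
noncomputable def delMinus [NeZero n] (Γ : GridDiagram n)
    (c : Equiv.Perm (ZMod n) → MvPolynomial (ZMod n) (ZMod 2)) :
    Equiv.Perm (ZMod n) → MvPolynomial (ZMod n) (ZMod 2) :=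
  fun τ => ∑ σ : Equiv.Perm (ZMod n),
    c σ * ∑ q ∈ univ.filter (fun q : (ZMod n × ZMod n) × ZMod n × ZMod n =>
        IsRect q ∧ Connects (rectInd q) σ τ ∧
          Pgen σ (rectInd q) + Pgen τ (rectInd q) = 1),
      rectU Γ q


lemma step_fn {n : ℕ} [NeZero n] (hn : 2 ≤ n) {a₁ a₂ : ZMod n} (h : a₁ ≠ a₂) (a : ZMod n) :
    ((if inCyc a₁ a₂ a then (1:ℤ) else 0) - if inCyc a₁ a₂ (a-1) then 1 else 0)
    = (if a = a₁ then 1 else 0) - (if a = a₂ then 1 else 0) := by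
  haveI : Fact (1 < n) := ⟨hn⟩
  have hL : 0 < (a₂ - a₁).val := ZMod.val_pos.mpr (sub_ne_zero.mpr h.symm)
  have hLlt : (a₂ - a₁).val < n := ZMod.val_lt _
  by_cases ha : a = a₁
  · subst ha
    have e1 : a - a = 0 := sub_self a
    have e2 : a - 1 - a = ((n - 1 : ℕ) : ZMod n) := by
      have : ((n - 1 : ℕ) : ZMod n) + 1 = 0 := by
        have : (((n - 1) + 1 : ℕ) : ZMod n) = 0 := by
          rw [Nat.sub_add_cancel (by omega)]; exact ZMod.natCast_self n
        push_cast at this ⊢; linear_combination this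
      linear_combination -this
    have e3 : (((n - 1 : ℕ) : ZMod n)).val = n - 1 := ZMod.val_cast_of_lt (by omega)
    simp only [inCyc, e1, e2, e3, ZMod.val_zero, if_pos rfl, if_neg h]
    split_ifs <;> omega
  · have hv : 1 ≤ (a - a₁).val := ZMod.val_pos.mpr (sub_ne_zero.mpr ha)
    have e2 : a - 1 - a₁ = a - a₁ - 1 := by ring
    have e3 : (a - a₁ - 1).val = (a - a₁).val - 1 := by
      rw [ZMod.val_sub (by rw [ZMod.val_one]; exact hv), ZMod.val_one]
    have key : a = a₂ ↔ (a - a₁).val = (a₂ - a₁).val := by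
      constructor
      · rintro rfl; rfl
      · intro hvv
        have := ZMod.val_injective n hvv
        have : a = a₂ := by linear_combination this
        exact this
    simp only [inCyc, e2, e3, key, if_neg ha]
    split_ifs <;> omega

lemma ite_eq_comm {α : Type*} [DecidableEq α] (x y : α) :
    (if x = y then (1:ℤ) else 0) = if y = x then 1 else 0 := by
  by_cases h : x = y
  · rw [if_pos h, if_pos h.symm]
  · rw [if_neg h, if_neg (fun hh => h hh.symm)]

lemma mixedDiff_rectInd {n : ℕ} [NeZero n] (hn : 2 ≤ n)
    {q : (ZMod n × ZMod n) × ZMod n × ZMod n} (hq : IsRect q) (p : ZMod n × ZMod n) :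
    mixedDiff (rectInd q) p =
      ((if p.1 = q.1.1 then (1:ℤ) else 0) - if p.1 = q.1.2 then 1 else 0) *
      ((if p.2 = q.2.1 then (1:ℤ) else 0) - if p.2 = q.2.2 then 1 else 0) := by
  have prod : ∀ x : ZMod n × ZMod n, rectInd q x =
      (if inCyc q.1.1 q.1.2 x.1 then (1:ℤ) else 0) *
      (if inCyc q.2.1 q.2.2 x.2 then (1:ℤ) else 0) := by
    intro x; unfold rectInd; split_ifs <;> simp_all
  rw [← step_fn hn hq.1 p.1, ← step_fn hn hq.2 p.2]
  simp only [mixedDiff, prod]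
  ring

lemma connects_rect_iff {n : ℕ} [NeZero n] (hn : 2 ≤ n)
    {q : (ZMod n × ZMod n) × ZMod n × ZMod n} (hq : IsRect q) (σ τ : Equiv.Perm (ZMod n)) :
    Connects (rectInd q) σ τ ↔
      σ q.2.1 = q.1.1 ∧ σ q.2.2 = q.1.2 ∧ τ q.2.1 = q.1.2 ∧ τ q.2.2 = q.1.1 ∧
        ∀ b, b ≠ q.2.1 → b ≠ q.2.2 → σ b = τ b := by
  obtain ⟨⟨a₁, a₂⟩, b₁, b₂⟩ := q
  obtain ⟨ha, hb⟩ := hq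
  simp only at ha hb ⊢
  constructor
  · intro hC
    have key : ∀ a b : ZMod n,
        ((if a = a₁ then (1:ℤ) else 0) - if a = a₂ then 1 else 0) *
        ((if b = b₁ then (1:ℤ) else 0) - if b = b₂ then 1 else 0)
        = (if σ b = a then 1 else 0) - (if τ b = a then 1 else 0) := by
      intro a b
      have := hC (a, b)
      rw [mixedDiff_rectInd hn ⟨ha, hb⟩] at this
      simpa [genInd] using this
    refine ⟨?_, ?_, ?_, ?_, ?_⟩
    · have := key a₁ b₁
      simp only [if_pos rfl, if_neg ha, if_neg hb] at this
      by_contra hne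
      rw [if_neg hne] at this
      split_ifs at this <;> omega
    · have := key a₂ b₂
      simp only [if_pos rfl, if_neg (Ne.symm ha), if_neg (Ne.symm hb)] at this
      by_contra hne
      rw [if_neg hne] at this
      split_ifs at this <;> omega
    · have := key a₂ b₁
      simp only [if_pos rfl, if_neg (Ne.symm ha), if_neg hb] at this
      by_contra hne
      rw [if_neg hne] at this
      split_ifs at this <;> omega
    · have := key a₁ b₂
      simp only [if_pos rfl, if_neg ha, if_neg (Ne.symm hb)] at this
      by_contra hne
      rw [if_neg hne] at this
      split_ifs at this <;> omega
    · intro b h1 h2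
      have := key (σ b) b
      simp only [if_pos rfl, if_neg h1, if_neg h2] at this
      by_contra hne
      rw [if_neg (fun h : τ b = σ b => hne h.symm)] at this
      simp only [sub_self, mul_zero, sub_zero] at this
      exact one_ne_zero this.symm
  · rintro ⟨h1, h2, h3, h4, h5⟩ p
    obtain ⟨a, b⟩ := p
    rw [mixedDiff_rectInd hn ⟨ha, hb⟩]
    simp only [genInd]
    by_cases e1 : b = b₁
    · subst e1
      simp only [if_pos rfl, if_neg hb, h1, h3]
      rw [ite_eq_comm a₁ a, ite_eq_comm a₂ a]
      ring_nf
      simp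
    · by_cases e2 : b = b₂
      · subst e2
        simp only [if_pos rfl, if_neg e1, h2, h4]
        rw [ite_eq_comm a₂ a, ite_eq_comm a₁ a]
        ring_nf
        simp
      · rw [if_neg e1, if_neg e2, h5 b e1 e2]
        ring

lemma inCyc_left {n : ℕ} [NeZero n] {a₁ a₂ : ZMod n} (h : a₁ ≠ a₂) : inCyc a₁ a₂ a₁ := by
  show (a₁ - a₁).val < _
  rw [sub_self, ZMod.val_zero]
  exact ZMod.val_pos.mpr (sub_ne_zero.mpr h.symm)

lemma not_inCyc_right {n : ℕ} {a₁ a₂ : ZMod n} : ¬ inCyc a₁ a₂ a₂ := lt_irrefl _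


lemma c5aux {n : ℕ} (σ τ : Equiv.Perm (ZMod n)) {b₁ b₂ : ZMod n}
    (hmem : ∀ b : ZMod n, σ b ≠ τ b ↔ b = b₁ ∨ b = b₂)
    (b : ZMod n) (e1 : b ≠ b₁) (e2 : b ≠ b₂) : σ b = τ b := by
  by_contra hne
  exact ((hmem b).1 hne).elim e1 e2

/-- If the permutations `σ`, `τ` defining two generators differ in
exactly two rows, then `R_{σ,τ}` (the set of rectangles, viewed as sets of cells,
connecting `σ` to `τ`) contains exactly two rectangles; in every other case
(including `σ = τ`) it is empty. -/
theorem card_rectangles_connecting (n : ℕ) [NeZero n] (hn : 2 ≤ n)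
    (Γ : GridDiagram n) (σ τ : Equiv.Perm (ZMod n)) :
    (((Finset.univ.filter fun b : ZMod n => σ b ≠ τ b).card = 2 →
        ((Finset.univ.filter fun q : (ZMod n × ZMod n) × ZMod n × ZMod n =>
            IsRect q ∧ Connects (rectInd q) σ τ).image rectCells).card = 2) ∧
      ((Finset.univ.filter fun b : ZMod n => σ b ≠ τ b).card ≠ 2 →
        ((Finset.univ.filter fun q : (ZMod n × ZMod n) × ZMod n × ZMod n =>
            IsRect q ∧ Connects (rectInd q) σ τ).image rectCells).card = 0)) := by
  constructor
  · intro h2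
    rw [Finset.card_eq_two] at h2
    obtain ⟨b₁, b₂, hb, hset⟩ := h2
    have hmem : ∀ b : ZMod n, σ b ≠ τ b ↔ b = b₁ ∨ b = b₂ := by
      intro b
      constructor
      · intro hbb
        have : b ∈ ({b₁, b₂} : Finset (ZMod n)) := by
          rw [← hset]; simp [hbb]
        simpa using this
      · intro hbb
        have : b ∈ Finset.univ.filter (fun b : ZMod n => σ b ≠ τ b) := by
          rw [hset]; simp [hbb]
        simpa using this
    have ha : σ b₁ ≠ σ b₂ := fun h => hb (σ.injective h)
    have hd1 : σ b₁ ≠ τ b₁ := (hmem b₁).2 (Or.inl rfl)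
    have hd2 : σ b₂ ≠ τ b₂ := (hmem b₂).2 (Or.inr rfl)
    have hτ2 : τ b₂ = σ b₁ := by
      have hc : τ (τ.symm (σ b₁)) = σ b₁ := τ.apply_symm_apply _
      by_cases e : τ.symm (σ b₁) = b₁
      · exact absurd (e ▸ hc).symm hd1
      · by_cases e2 : τ.symm (σ b₁) = b₂
        · exact e2 ▸ hc
        · have := c5aux σ τ hmem _ e e2
          exact absurd (σ.injective (this.trans hc)) e
    have hτ1 : τ b₁ = σ b₂ := by
      have hc : τ (τ.symm (σ b₂)) = σ b₂ := τ.apply_symm_apply _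
      by_cases e : τ.symm (σ b₂) = b₂
      · exact absurd (e ▸ hc).symm hd2
      · by_cases e2 : τ.symm (σ b₂) = b₁
        · exact e2 ▸ hc
        · have := c5aux σ τ hmem _ e2 e
          exact absurd (σ.injective (this.trans hc)) e
    have hfil : (Finset.univ.filter fun q : (ZMod n × ZMod n) × ZMod n × ZMod n =>
          IsRect q ∧ Connects (rectInd q) σ τ)
        = {((σ b₁, σ b₂), (b₁, b₂)), ((σ b₂, σ b₁), (b₂, b₁))} := by
      ext q
      simp only [Finset.mem_filter, Finset.mem_univ, true_and, Finset.mem_insert,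
        Finset.mem_singleton]
      constructor
      · rintro ⟨hq, hC⟩
        rw [connects_rect_iff hn hq σ τ] at hC
        obtain ⟨c1, c2, c3, c4, c5⟩ := hC
        obtain ⟨⟨u₁, u₂⟩, v₁, v₂⟩ := q
        simp only at c1 c2 c3 c4 c5 ⊢
        have hne1 : σ v₁ ≠ τ v₁ := by rw [c1, c3]; exact hq.1
        have hne2 : σ v₂ ≠ τ v₂ := by rw [c2, c4]; exact fun h => hq.1 h.symm
        have hv1 := (hmem v₁).1 hne1
        have hv2 := (hmem v₂).1 hne2
        have hvne : v₁ ≠ v₂ := hq.2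
        rcases hv1 with rfl | rfl
        · have hv2' : v₂ = b₂ := hv2.resolve_left (fun h => hvne h.symm)
          subst hv2'
          left
          rw [← c1, ← c2]
        · have hv2' : v₂ = b₁ := hv2.resolve_right (fun h => hvne h.symm)
          subst hv2'
          right
          rw [← c1, ← c2]
      · have hout : ∀ b : ZMod n, b ≠ b₁ → b ≠ b₂ → σ b = τ b := by
          intro b e1 e2
          by_contra hne
          exact ((hmem b).1 hne).elim e1 e2
        rintro (rfl | rfl)
        · refine ⟨⟨ha, hb⟩, ?_⟩
          rw [connects_rect_iff hn ⟨ha, hb⟩]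
          exact ⟨rfl, rfl, hτ1, hτ2, hout⟩
        · refine ⟨⟨Ne.symm ha, Ne.symm hb⟩, ?_⟩
          rw [connects_rect_iff hn ⟨Ne.symm ha, Ne.symm hb⟩]
          exact ⟨rfl, rfl, hτ2, hτ1, fun b e1 e2 => hout b e2 e1⟩
    rw [hfil, Finset.image_insert, Finset.image_singleton]
    rw [Finset.card_insert_of_notMem, Finset.card_singleton]
    simp only [Finset.mem_singleton]
    intro heq
    have hm1 : (σ b₁, b₁) ∈ rectCells (((σ b₁, σ b₂), (b₁, b₂)) :
        (ZMod n × ZMod n) × ZMod n × ZMod n) := by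
      simp only [rectCells, Finset.mem_filter, Finset.mem_univ, true_and]
      exact ⟨inCyc_left ha, inCyc_left hb⟩
    rw [heq] at hm1
    simp only [rectCells, Finset.mem_filter, Finset.mem_univ, true_and] at hm1
    exact not_inCyc_right hm1.1
  · intro hneq
    have hfil : (Finset.univ.filter fun q : (ZMod n × ZMod n) × ZMod n × ZMod n =>
          IsRect q ∧ Connects (rectInd q) σ τ) = ∅ := by
      rw [Finset.eq_empty_iff_forall_notMem]
      intro q hq
      simp only [Finset.mem_filter, Finset.mem_univ, true_and] at hq
      obtain ⟨hqr, hC⟩ := hq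
      rw [connects_rect_iff hn hqr σ τ] at hC
      obtain ⟨c1, c2, c3, c4, c5⟩ := hC
      apply hneq
      have hset : (Finset.univ.filter fun b : ZMod n => σ b ≠ τ b) = {q.2.1, q.2.2} := by
        ext b
        simp only [Finset.mem_filter, Finset.mem_univ, true_and, Finset.mem_insert,
          Finset.mem_singleton]
        constructor
        · intro hbb
          by_contra hcon
          push_neg at hcon
          exact hbb (c5 b hcon.1 hcon.2)
        · rintro (rfl | rfl)
          · rw [c1, c3]; exact hqr.1
          · rw [c2, c4]; exact fun h => hqr.1 h.symm
      rw [hset, Finset.card_insert_of_notMem (by simp [hqr.2]), Finset.card_singleton]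
    rw [hfil]
    simp
end

section
/- Let Γ be a grid diagram of size n. For any two generators x and y there exists a 2-chain D connecting x to y, i.e. a function D : (ZMod n)² → ℤ with δD = 1_x − 1_y. -/
open Finset

variable {n : ℕ}

section Aux
variable {n : ℕ} [NeZero n]

lemma sum_range_castZMod (f : ZMod n → ℤ) :
    ∑ j ∈ Finset.range n, f (j : ZMod n) = ∑ j : ZMod n, f j := by
  apply Finset.sum_nbij' (fun j => ((j : ℕ) : ZMod n)) (fun x => x.val)
  · intro a ha; exact Finset.mem_univ _
  · intro a ha; exact Finset.mem_range.mpr (ZMod.val_lt a)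
  · intro a ha; exact ZMod.val_cast_of_lt (Finset.mem_range.mp ha)
  · intro a ha; exact ZMod.natCast_rightInverse a
  · intro a ha; rfl

lemma sum_ind_row (σ : Equiv.Perm (ZMod n)) (i : ZMod n) :
    ∑ j ∈ Finset.range n, (if σ (j : ZMod n) = i then (1:ℤ) else 0) = 1 := by
  rw [sum_range_castZMod (fun j => if σ j = i then (1:ℤ) else 0)]
  simp [Equiv.apply_eq_iff_eq_symm_apply]

lemma sum_ind_col (σ : Equiv.Perm (ZMod n)) (j : ZMod n) :
    ∑ i ∈ Finset.range n, (if σ j = (i : ZMod n) then (1:ℤ) else 0) = 1 := by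
  rw [sum_range_castZMod (fun i => if σ j = i then (1:ℤ) else 0)]
  simp

lemma val_sub_one_of_ne_zero {a : ZMod n} (ha : a ≠ 0) :
    (a - 1).val + 1 = a.val ∧ 1 ≤ a.val := by
  have h1 : 1 ≤ a.val := by
    rcases Nat.pos_of_ne_zero (fun h => ha (by rwa [← ZMod.val_eq_zero])) with h
    exact h
  constructor
  · have : a - 1 = ((a.val - 1 : ℕ) : ZMod n) := by
      have := ZMod.natCast_rightInverse a
      push_cast [Nat.cast_sub h1]
      simp [ZMod.natCast_val, ZMod.cast_id]
    rw [this, ZMod.val_cast_of_lt (lt_of_le_of_lt (Nat.sub_le _ _) (ZMod.val_lt a))]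
    omega
  · exact h1

lemma val_neg_one' : ((-1 : ZMod n)).val + 1 = n := by
  have : (-1 : ZMod n) = ((n - 1 : ℕ) : ZMod n) := by
    have hn : 1 ≤ n := Nat.one_le_iff_ne_zero.mpr (NeZero.ne n)
    push_cast [Nat.cast_sub hn]
    simp
  have hn : 1 ≤ n := Nat.one_le_iff_ne_zero.mpr (NeZero.ne n)
  rw [this, ZMod.val_cast_of_lt (by omega : n - 1 < n)]
  omega

end Aux

/-- In a grid diagram of size `n`, any two generators `σ`, `τ`
are connected by some 2-chain `D`, i.e. there is `D : (ZMod n)² → ℤ` with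
`δD = 1_σ − 1_τ`. -/
theorem exists_two_chain_connecting (n : ℕ) [NeZero n] (hn : 2 ≤ n)
    (Γ : GridDiagram n) (σ τ : Equiv.Perm (ZMod n)) :
    ∃ D : ZMod n × ZMod n → ℤ, Connects D σ τ := by
  classical
  set g : ZMod n × ZMod n → ℤ := fun p => genInd σ p - genInd τ p with hg
  have hrow : ∀ i : ZMod n, ∑ j ∈ Finset.range n, g (i, (j : ZMod n)) = 0 := by
    intro i
    simp only [hg, genInd, Finset.sum_sub_distrib]
    rw [sum_ind_row σ i, sum_ind_row τ i]
    ring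
  have hcol : ∀ j : ZMod n, ∑ i ∈ Finset.range n, g ((i : ZMod n), j) = 0 := by
    intro j
    simp only [hg, genInd, Finset.sum_sub_distrib]
    rw [sum_ind_col σ j, sum_ind_col τ j]
    ring
  set T : ℕ → ℕ → ℤ := fun A B => ∑ i ∈ Finset.range A, ∑ j ∈ Finset.range B,
    g ((i : ZMod n), (j : ZMod n)) with hT
  have hTn : ∀ B, T n B = 0 := by
    intro B
    rw [hT]
    simp only
    rw [Finset.sum_comm]
    refine Finset.sum_eq_zero fun j _ => hcol _
  have hTn' : ∀ A, T A n = 0 := by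
    intro A
    refine Finset.sum_eq_zero fun i _ => hrow _
  have hstep : ∀ (A : ℕ) (X : ℕ), T (A + 1) X - T A X = ∑ j ∈ Finset.range X,
      g ((A : ZMod n), (j : ZMod n)) := by
    intro A X
    rw [hT]
    simp only
    rw [Finset.sum_range_succ]
    ring
  refine ⟨fun p => T (p.1.val + 1) (p.2.val + 1), ?_⟩
  rintro ⟨a, b⟩
  show T (a.val + 1) (b.val + 1) - T ((a - 1).val + 1) (b.val + 1)
      - T (a.val + 1) ((b - 1).val + 1) + T ((a - 1).val + 1) ((b - 1).val + 1)
      = g (a, b)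
  have hcasta : ((a.val : ℕ) : ZMod n) = a := ZMod.natCast_rightInverse a
  have hcastb : ((b.val : ℕ) : ZMod n) = b := ZMod.natCast_rightInverse b
  by_cases ha : a = 0
  · subst ha
    by_cases hb : b = 0
    · subst hb
      rw [zero_sub, val_neg_one', ZMod.val_zero]
      rw [hTn, hTn', hTn]
      have h11 : T (0 + 1) (0 + 1) = g (((0 : ℕ) : ZMod n), ((0 : ℕ) : ZMod n)) := by
        rw [hT]; simp
      norm_num at h11 ⊢
      omega
    · obtain ⟨hB, _⟩ := val_sub_one_of_ne_zero hb
      rw [zero_sub, val_neg_one', ZMod.val_zero, hB, hTn, hTn]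
      have h1 := hstep 0 (b.val + 1)
      have h2 := hstep 0 b.val
      have hT0 : ∀ X, T 0 X = 0 := by intro X; rw [hT]; simp
      rw [hT0] at h1 h2
      have key : (∑ j ∈ Finset.range (b.val + 1), g (((0 : ℕ) : ZMod n), (j : ZMod n)))
          - ∑ j ∈ Finset.range b.val, g (((0 : ℕ) : ZMod n), (j : ZMod n)) = g (0, b) := by
        rw [Finset.sum_range_succ, hcastb]
        norm_num
      norm_num at h1 h2 key ⊢
      omega
  · obtain ⟨hA, _⟩ := val_sub_one_of_ne_zero ha
    rw [hA]
    by_cases hb : b = 0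
    · subst hb
      rw [zero_sub, val_neg_one', ZMod.val_zero, hTn', hTn']
      have h1 := hstep a.val 1
      rw [Finset.sum_range_one, hcasta] at h1
      norm_num at h1 ⊢
      omega
    · obtain ⟨hB, _⟩ := val_sub_one_of_ne_zero hb
      rw [hB]
      have h1 := hstep a.val (b.val + 1)
      have h2 := hstep a.val b.val
      rw [hcasta] at h1 h2
      have key : (∑ j ∈ Finset.range (b.val + 1), g (a, (j : ZMod n)))
          - ∑ j ∈ Finset.range b.val, g (a, (j : ZMod n)) = g (a, b) := by
        rw [Finset.sum_range_succ, hcastb]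
        ring
      omega
end

section
/- Let Γ be a grid diagram of size n and let x, y be generators. If D and D′ are two 2-chains, each connecting x to y, then P_x(D) + P_y(D) − 2·W(D) = P_x(D′) + P_y(D′) − 2·W(D′); that is, the quantity P_x(D) + P_y(D) − 2·W(D) defining the relative Maslov grading is independent of the choice of 2-chain connecting x to y. -/
open Finset

variable {n : ℕ}

/-- The quantity `P_x(D) + P_y(D) − 2·W(D)` defining the relative
Maslov grading is independent of the choice of the 2-chain `D` connecting `x` to `y`. -/
theorem relative_maslov_well_defined (n : ℕ) [NeZero n] (hn : 2 ≤ n)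
    (Γ : GridDiagram n) (σ τ : Equiv.Perm (ZMod n)) (D D' : ZMod n × ZMod n → ℤ)
    (hD : Connects D σ τ) (hD' : Connects D' σ τ) :
    Pgen σ D + Pgen τ D - 2 * (Wmult Γ D : ℚ)
      = Pgen σ D' + Pgen τ D' - 2 * (Wmult Γ D' : ℚ) := by
  set E : ZMod n × ZMod n → ℤ := fun p => D p - D' p with hEdef
  have hE : ∀ p, mixedDiff E p = 0 := by
    intro p
    have h1 := hD p
    have h2 := hD' p
    simp only [mixedDiff, hEdef] at h1 h2 ⊢
    linarith
  have key : ∀ (k l : ℕ), E ((k : ZMod n), (l : ZMod n))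
      = E ((k : ZMod n), 0) + E (0, (l : ZMod n)) - E (0, 0) := by
    intro k
    induction k with
    | zero => intro l; simp
    | succ k ih =>
      intro l
      induction l with
      | zero => simp
      | succ l ihl =>
        have h := hE (((k + 1 : ℕ) : ZMod n), ((l + 1 : ℕ) : ZMod n))
        simp only [mixedDiff] at h
        have e1 : ((k + 1 : ℕ) : ZMod n) - 1 = ((k : ℕ) : ZMod n) := by
          push_cast; ring
        have e2 : ((l + 1 : ℕ) : ZMod n) - 1 = ((l : ℕ) : ZMod n) := by
          push_cast; ring
        rw [e1, e2] at h
        have hk := ih l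
        have hk1 := ih (l + 1)
        linarith
  set f : ZMod n → ℤ := fun a => E (a, 0) with hf
  set g : ZMod n → ℤ := fun b => E (0, b) - E (0, 0) with hg
  have key2 : ∀ p : ZMod n × ZMod n, E p = f p.1 + g p.2 := by
    rintro ⟨a, b⟩
    have h := key a.val b.val
    rw [ZMod.natCast_rightInverse a, ZMod.natCast_rightInverse b] at h
    simp only [hf, hg]
    linarith
  set F : ℤ := ∑ a : ZMod n, f a with hF
  set G : ℤ := ∑ b : ZMod n, g b with hG
  have hshift : ∀ (h : ZMod n → ℤ), ∑ b : ZMod n, h (b - 1) = ∑ b : ZMod n, h b :=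
    fun h => Fintype.sum_equiv (Equiv.subRight (1 : ZMod n)) _ _ (fun b => rfl)
  have hP : ∀ ρ : Equiv.Perm (ZMod n),
      Pgen ρ D - Pgen ρ D' = ((F + G : ℤ) : ℚ) := by
    intro ρ
    have step1 : Pgen ρ D - Pgen ρ D' =
        ∑ b : ZMod n,
          ((f (ρ b) + f (ρ b - 1) + g b + g (b - 1) : ℤ) : ℚ) / 2 := by
      rw [Pgen, Pgen, ← Finset.sum_sub_distrib]
      refine Finset.sum_congr rfl fun b _ => ?_
      have e1 := key2 (ρ b, b)
      have e2 := key2 (ρ b - 1, b)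
      have e3 := key2 (ρ b, b - 1)
      have e4 := key2 (ρ b - 1, b - 1)
      simp only [hEdef] at e1 e2 e3 e4
      simp only [locMult]
      push_cast
      qify at e1 e2 e3 e4
      linarith
    rw [step1]
    have : ∑ b : ZMod n,
        ((f (ρ b) + f (ρ b - 1) + g b + g (b - 1) : ℤ) : ℚ) / 2
        = (((∑ b : ZMod n, (f (ρ b) + f (ρ b - 1) + g b + g (b - 1))) : ℤ) : ℚ) / 2 := by
      rw [← Finset.sum_div]
      push_cast
      ring
    rw [this]
    have hsum : ∑ b : ZMod n, (f (ρ b) + f (ρ b - 1) + g b + g (b - 1))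
        = 2 * F + 2 * G := by
      rw [Finset.sum_add_distrib, Finset.sum_add_distrib, Finset.sum_add_distrib]
      rw [Equiv.sum_comp ρ f, Equiv.sum_comp ρ (fun a => f (a - 1)), hshift f,
        hshift g]
      simp only [hF, hG]; ring
    rw [hsum]
    push_cast
    ring
  have hW : (Wmult Γ D : ℚ) - (Wmult Γ D' : ℚ) = ((F + G : ℤ) : ℚ) := by
    have : Wmult Γ D - Wmult Γ D' = F + G := by
      rw [Wmult, Wmult, ← Finset.sum_sub_distrib]
      have : ∀ b : ZMod n, D (Γ.O b, b) - D' (Γ.O b, b) = f (Γ.O b) + g b := by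
        intro b
        have := key2 (Γ.O b, b)
        simpa [hEdef] using this
      rw [Finset.sum_congr rfl fun b _ => this b, Finset.sum_add_distrib,
        Equiv.sum_comp Γ.O f]
    push_cast
    exact_mod_cast this
  have h1 := hP σ
  have h2 := hP τ
  linarith
end

section
/- Let Γ be a grid diagram of size n. There exists a unique function M from the set of generators to ℤ (the Maslov grading) such that: (i) M(x₀) = 1 − n, where x₀ is the generator with point set {(O(b), b) : b ∈ ZMod n} (the lower-left corners of the cells containing white dots); and (ii) M(x) − M(y) = P_x(D) + P_y(D) − 2·W(D) whenever a 2-chain D connects x to y. In particular, the rational number P_x(D) + P_y(D) − 2·W(D) is always an integer. -/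
open Finset

variable {n : ℕ}

namespace MG

variable {n : ℕ} [NeZero n]

/-- Sum of the values of a 2-chain at the four lattice points around `p`
(i.e. `4` times the local multiplicity). -/
def corner (D : ZMod n × ZMod n → ℤ) (p : ZMod n × ZMod n) : ℤ :=
  D p + D (p.1 - 1, p.2) + D (p.1, p.2 - 1) + D (p.1 - 1, p.2 - 1)

/-- `4 * P_σ(D)` as an integer. -/
def Qs (σ : Equiv.Perm (ZMod n)) (D : ZMod n × ZMod n → ℤ) : ℤ :=
  ∑ b : ZMod n, corner D (σ b, b)

/-- Box-counting function of a generator. -/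
def Nc (σ : Equiv.Perm (ZMod n)) : ZMod n × ZMod n → ℤ := fun p =>
  ∑ b : ZMod n, if (σ b).val ≤ p.1.val ∧ b.val ≤ p.2.val then (1 : ℤ) else 0

/-- The canonical 2-chain connecting `σ` to `τ`. -/
def can (σ τ : Equiv.Perm (ZMod n)) : ZMod n × ZMod n → ℤ := fun p => Nc σ p - Nc τ p

/-- `4 * (P_σ(D) + P_τ(D) - 2 W(D))` as an integer. -/
def ival (Γ : GridDiagram n) (σ τ : Equiv.Perm (ZMod n)) (D : ZMod n × ZMod n → ℤ) : ℤ :=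
  Qs σ D + Qs τ D - 8 * Wmult Γ D

lemma val_inj {a b : ZMod n} (h : a.val = b.val) : a = b :=
  ZMod.val_injective n h

lemma val_sub_one (a : ZMod n) : (a - 1).val = if a = 0 then n - 1 else a.val - 1 := by
  have hn : 0 < n := Nat.pos_of_ne_zero (NeZero.ne n)
  by_cases h : a = 0
  · subst h
    rw [if_pos rfl]
    have h1 : ((n - 1 : ℕ) : ZMod n) = 0 - 1 := by
      rw [Nat.cast_sub hn, ZMod.natCast_self, Nat.cast_one]
    rw [← h1, ZMod.val_cast_of_lt (by omega)]
  · rw [if_neg h]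
    have hv : a.val ≠ 0 := by rwa [Ne, ZMod.val_eq_zero]
    have hlt : a.val < n := ZMod.val_lt a
    have h1 : a - 1 = ((a.val - 1 : ℕ) : ZMod n) := by
      conv_lhs => rw [show a = ((a.val : ℕ) : ZMod n) by rw [ZMod.natCast_val, ZMod.cast_id]]
      rw [Nat.cast_sub (by omega), Nat.cast_one]
    rw [h1, ZMod.val_cast_of_lt (by omega)]

lemma ite_mul_ite (P Q : Prop) [Decidable P] [Decidable Q] :
    (if P ∧ Q then (1 : ℤ) else 0) = (if P then (1 : ℤ) else 0) * (if Q then 1 else 0) := by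
  split_ifs <;> simp_all

lemma colK (a c : ZMod n) :
    ((if c.val ≤ a.val then (1 : ℤ) else 0) - (if c.val ≤ (a - 1).val then 1 else 0))
      = (if c = a then 1 else 0) - (if a = 0 then 1 else 0) := by
  rw [val_sub_one]
  have hcn : c.val < n := ZMod.val_lt c
  have han : a.val < n := ZMod.val_lt a
  have hca : (c = a) ↔ c.val = a.val := ⟨fun h => by rw [h], fun h => val_inj h⟩
  have hz : (a = 0) ↔ a.val = 0 := by rw [← ZMod.val_eq_zero]
  simp only [hca, hz]
  split_ifs <;> omega

lemma sum_ind_perm (σ : Equiv.Perm (ZMod n)) (a : ZMod n) :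
    (∑ b : ZMod n, if σ b = a then (1 : ℤ) else 0) = 1 := by
  have h : ∀ b : ZMod n, (σ b = a) = (b = σ.symm a) :=
    fun b => propext (Equiv.apply_eq_iff_eq_symm_apply σ)
  simp [h]

lemma nc_key (σ : Equiv.Perm (ZMod n)) (a b : ZMod n) : ∀ b' : ZMod n,
      ((if (σ b').val ≤ a.val ∧ b'.val ≤ b.val then (1 : ℤ) else 0)
        - (if (σ b').val ≤ (a - 1).val ∧ b'.val ≤ b.val then 1 else 0)
        - (if (σ b').val ≤ a.val ∧ b'.val ≤ (b - 1).val then 1 else 0)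
        + (if (σ b').val ≤ (a - 1).val ∧ b'.val ≤ (b - 1).val then 1 else 0))
      = ((if σ b' = a then (1 : ℤ) else 0) - (if a = 0 then 1 else 0))
        * ((if b' = b then (1 : ℤ) else 0) - (if b = 0 then 1 else 0)) := by
  intro b'
  rw [ite_mul_ite, ite_mul_ite, ite_mul_ite, ite_mul_ite, ← colK a (σ b'), ← colK b b']
  ring

lemma mixedDiff_Nc (σ : Equiv.Perm (ZMod n)) (p : ZMod n × ZMod n) :
    mixedDiff (Nc σ) p = genInd σ p - (if p.1 = 0 then 1 else 0) - (if p.2 = 0 then 1 else 0)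
      + (if p.1 = 0 ∧ p.2 = 0 then (n : ℤ) else 0) := by
  obtain ⟨a, b⟩ := p
  have h2 : mixedDiff (Nc σ) (a, b)
      = ∑ b' : ZMod n, (((if σ b' = a then (1 : ℤ) else 0) - (if a = 0 then 1 else 0))
          * ((if b' = b then (1 : ℤ) else 0) - (if b = 0 then 1 else 0))) := by
    simp only [mixedDiff, Nc]
    rw [← Finset.sum_sub_distrib, ← Finset.sum_sub_distrib, ← Finset.sum_add_distrib]
    exact Finset.sum_congr rfl fun b' _ => nc_key σ a b b'
  rw [h2]
  have expand : ∀ b' : ZMod n,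
      (((if σ b' = a then (1 : ℤ) else 0) - (if a = 0 then 1 else 0))
          * ((if b' = b then (1 : ℤ) else 0) - (if b = 0 then 1 else 0)))
      = (if σ b' = a then (1 : ℤ) else 0) * (if b' = b then 1 else 0)
        - (if a = 0 then (1 : ℤ) else 0) * (if b' = b then 1 else 0)
        - (if b = 0 then (1 : ℤ) else 0) * (if σ b' = a then 1 else 0)
        + (if a = 0 then (1 : ℤ) else 0) * (if b = 0 then 1 else 0) := fun b' => by ring
  simp only [expand]
  rw [Finset.sum_add_distrib, Finset.sum_sub_distrib, Finset.sum_sub_distrib]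
  have hXY : (∑ b' : ZMod n, (if σ b' = a then (1 : ℤ) else 0) * (if b' = b then 1 else 0))
      = (if σ b = a then (1 : ℤ) else 0) := by
    rw [Finset.sum_eq_single b]
    · simp
    · intro c _ hc; simp [hc]
    · intro h; exact absurd (Finset.mem_univ b) h
  have hca : (∑ b' : ZMod n, (if a = 0 then (1 : ℤ) else 0) * (if b' = b then 1 else 0))
      = (if a = 0 then (1 : ℤ) else 0) := by
    rw [← Finset.mul_sum]; simp
  have hcb : (∑ b' : ZMod n, (if b = 0 then (1 : ℤ) else 0) * (if σ b' = a then 1 else 0))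
      = (if b = 0 then (1 : ℤ) else 0) := by
    rw [← Finset.mul_sum, sum_ind_perm, mul_one]
  have hcc : (∑ _b' : ZMod n, (if a = 0 then (1 : ℤ) else 0) * (if b = 0 then 1 else 0))
      = (if a = 0 ∧ b = 0 then (n : ℤ) else 0) := by
    rw [Finset.sum_const, Finset.card_univ, ZMod.card, nsmul_eq_mul]
    split_ifs <;> simp_all
  rw [hXY, hca, hcb, hcc]
  simp only [genInd]

lemma connects_can (σ τ : Equiv.Perm (ZMod n)) : Connects (can σ τ) σ τ := by
  intro p
  have h1 : mixedDiff (can σ τ) p = mixedDiff (Nc σ) p - mixedDiff (Nc τ) p := by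
    simp only [mixedDiff, can]; ring
  rw [h1, mixedDiff_Nc, mixedDiff_Nc]; ring

section Kernel

lemma const_of_step (f : ZMod n → ℤ) (h : ∀ b, f b = f (b - 1)) (b c : ZMod n) : f b = f c := by
  have key : ∀ (k : ℕ) (b : ZMod n), f b = f (b - (k : ZMod n)) := by
    intro k
    induction k with
    | zero => simp
    | succ m ih =>
      intro b
      rw [ih b, h (b - (m : ZMod n))]
      congr 1
      push_cast
      ring
  have h2 := key (b - c).val b
  rwa [ZMod.natCast_val, ZMod.cast_id, sub_sub_cancel] at h2

variable {E : ZMod n × ZMod n → ℤ}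

lemma step_row (hE : ∀ p, mixedDiff E p = 0) (a b : ZMod n) :
    E (a, b) - E (a - 1, b) = E (a, 0) - E (a - 1, 0) :=
  const_of_step (fun b => E (a, b) - E (a - 1, b))
    (fun b => by
      have := hE (a, b); simp only [mixedDiff] at this
      show E (a, b) - E (a - 1, b) = E (a, b - 1) - E (a - 1, b - 1)
      linarith) b 0

lemma decomp (hE : ∀ p, mixedDiff E p = 0) (a b : ZMod n) :
    E (a, b) = E (a, 0) + E (0, b) - E (0, 0) := by
  have h2 : E (a, b) - E (a, 0) = E (0, b) - E (0, 0) :=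
    const_of_step (fun a => E (a, b) - E (a, 0))
      (fun a => by
        have := step_row hE a b
        show E (a, b) - E (a, 0) = E (a - 1, b) - E (a - 1, 0)
        linarith) a 0
  linarith

lemma diag_sum (hE : ∀ p, mixedDiff E p = 0) (ρ : Equiv.Perm (ZMod n)) :
    (∑ b : ZMod n, E (ρ b, b))
      = (∑ a : ZMod n, E (a, 0)) + (∑ b : ZMod n, E (0, b)) - n * E (0, 0) := by
  have h1 : (∑ b : ZMod n, E (ρ b, b)) = ∑ b : ZMod n, (E (ρ b, 0) + E (0, b) - E (0, 0)) :=
    Finset.sum_congr rfl fun b _ => decomp hE _ _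
  rw [h1, Finset.sum_sub_distrib, Finset.sum_add_distrib,
    Equiv.sum_comp ρ (fun a => E (a, 0)), Finset.sum_const, Finset.card_univ, ZMod.card,
    nsmul_eq_mul]

lemma qs_kernel (Γ : GridDiagram n) (hE : ∀ p, mixedDiff E p = 0) (π : Equiv.Perm (ZMod n)) :
    Qs π E = 4 * Wmult Γ E := by
  have h1 := diag_sum hE π
  have h2 : (∑ b : ZMod n, E (π b - 1, b))
      = (∑ a : ZMod n, E (a, 0)) + (∑ b : ZMod n, E (0, b)) - n * E (0, 0) := by
    have := diag_sum hE (π.trans (Equiv.subRight (1 : ZMod n)))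
    simpa using this
  have h3 : (∑ b : ZMod n, E (π b, b - 1))
      = (∑ a : ZMod n, E (a, 0)) + (∑ b : ZMod n, E (0, b)) - n * E (0, 0) := by
    have step : (∑ c : ZMod n, E (π (c + 1), c)) = ∑ b : ZMod n, E (π b, b - 1) := by
      apply Fintype.sum_equiv (Equiv.addRight (1 : ZMod n))
      intro c
      simp
    rw [← step]
    have := diag_sum hE ((Equiv.addRight (1 : ZMod n)).trans π)
    simpa using this
  have h4 : (∑ b : ZMod n, E (π b - 1, b - 1))
      = (∑ a : ZMod n, E (a, 0)) + (∑ b : ZMod n, E (0, b)) - n * E (0, 0) := by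
    have step : (∑ c : ZMod n, E (π (c + 1) - 1, c)) = ∑ b : ZMod n, E (π b - 1, b - 1) := by
      apply Fintype.sum_equiv (Equiv.addRight (1 : ZMod n))
      intro c
      simp
    rw [← step]
    have := diag_sum hE ((Equiv.addRight (1 : ZMod n)).trans
      (π.trans (Equiv.subRight (1 : ZMod n))))
    simpa using this
  have hW : Wmult Γ E
      = (∑ a : ZMod n, E (a, 0)) + (∑ b : ZMod n, E (0, b)) - n * E (0, 0) := diag_sum hE Γ.O
  have hQ : Qs π E = (∑ b : ZMod n, E (π b, b)) + (∑ b : ZMod n, E (π b - 1, b))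
      + (∑ b : ZMod n, E (π b, b - 1)) + (∑ b : ZMod n, E (π b - 1, b - 1)) := by
    simp only [Qs, corner]
    rw [Finset.sum_add_distrib, Finset.sum_add_distrib, Finset.sum_add_distrib]
  rw [hQ, h1, h2, h3, h4, hW]
  ring

end Kernel

section Adjoint

lemma shift_pair (f : ZMod n × ZMod n → ℤ) (w : ZMod n × ZMod n) :
    (∑ p : ZMod n × ZMod n, f (p - w)) = ∑ p : ZMod n × ZMod n, f p :=
  Fintype.sum_equiv (Equiv.subRight w) (fun p => f (p - w)) f (fun _ => by simp)

lemma sum_mixed_corner (D E : ZMod n × ZMod n → ℤ) :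
    (∑ p : ZMod n × ZMod n, mixedDiff D p * corner E p)
      = ∑ p : ZMod n × ZMod n, D p *
          (E (p.1 + 1, p.2 + 1) - E (p.1 + 1, p.2 - 1) - E (p.1 - 1, p.2 + 1)
            + E (p.1 - 1, p.2 - 1)) := by
  have h1 : ∀ p : ZMod n × ZMod n, mixedDiff D p * corner E p
      = D p * corner E p - D (p.1 - 1, p.2) * corner E p - D (p.1, p.2 - 1) * corner E p
        + D (p.1 - 1, p.2 - 1) * corner E p := fun p => by simp only [mixedDiff]; ring
  simp only [h1]
  rw [Finset.sum_add_distrib, Finset.sum_sub_distrib, Finset.sum_sub_distrib]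
  have r1 : (∑ p : ZMod n × ZMod n, D (p.1 - 1, p.2) * corner E p)
      = ∑ p : ZMod n × ZMod n, D p * corner E (p.1 + 1, p.2) := by
    rw [← shift_pair (fun q => D q * corner E (q.1 + 1, q.2)) ((1, 0) : ZMod n × ZMod n)]
    apply Finset.sum_congr rfl
    intro p _
    have hp : p - ((1, 0) : ZMod n × ZMod n) = (p.1 - 1, p.2) := by
      ext <;> simp
    rw [hp]
    simp
  have r2 : (∑ p : ZMod n × ZMod n, D (p.1, p.2 - 1) * corner E p)
      = ∑ p : ZMod n × ZMod n, D p * corner E (p.1, p.2 + 1) := by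
    rw [← shift_pair (fun q => D q * corner E (q.1, q.2 + 1)) ((0, 1) : ZMod n × ZMod n)]
    apply Finset.sum_congr rfl
    intro p _
    have hp : p - ((0, 1) : ZMod n × ZMod n) = (p.1, p.2 - 1) := by
      ext <;> simp
    rw [hp]
    simp
  have r3 : (∑ p : ZMod n × ZMod n, D (p.1 - 1, p.2 - 1) * corner E p)
      = ∑ p : ZMod n × ZMod n, D p * corner E (p.1 + 1, p.2 + 1) := by
    rw [← shift_pair (fun q => D q * corner E (q.1 + 1, q.2 + 1)) ((1, 1) : ZMod n × ZMod n)]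
    apply Finset.sum_congr rfl
    intro p _
    have hp : p - ((1, 1) : ZMod n × ZMod n) = (p.1 - 1, p.2 - 1) := by
      ext <;> simp
    rw [hp]
    simp
  rw [r1, r2, r3, ← Finset.sum_sub_distrib, ← Finset.sum_sub_distrib, ← Finset.sum_add_distrib]
  apply Finset.sum_congr rfl
  intro p _
  simp only [corner, add_sub_cancel_right]
  ring

lemma sum_adjoint (D E : ZMod n × ZMod n → ℤ) :
    (∑ p : ZMod n × ZMod n, mixedDiff D p * corner E p)
      = ∑ p : ZMod n × ZMod n, mixedDiff E p * corner D p := by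
  rw [sum_mixed_corner, sum_mixed_corner]
  have expand : ∀ (A B : ZMod n × ZMod n → ℤ),
      (∑ p : ZMod n × ZMod n, A p * (B (p.1 + 1, p.2 + 1) - B (p.1 + 1, p.2 - 1)
          - B (p.1 - 1, p.2 + 1) + B (p.1 - 1, p.2 - 1)))
      = (∑ p : ZMod n × ZMod n, A p * B (p.1 + 1, p.2 + 1))
        - (∑ p : ZMod n × ZMod n, A p * B (p.1 + 1, p.2 - 1))
        - (∑ p : ZMod n × ZMod n, A p * B (p.1 - 1, p.2 + 1))
        + (∑ p : ZMod n × ZMod n, A p * B (p.1 - 1, p.2 - 1)) := by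
    intro A B
    rw [← Finset.sum_sub_distrib, ← Finset.sum_sub_distrib, ← Finset.sum_add_distrib]
    exact Finset.sum_congr rfl fun p _ => by ring
  rw [expand, expand]
  have swap1 : (∑ p : ZMod n × ZMod n, D p * E (p.1 - 1, p.2 - 1))
      = ∑ p : ZMod n × ZMod n, E p * D (p.1 + 1, p.2 + 1) := by
    rw [← shift_pair (fun q => E q * D (q.1 + 1, q.2 + 1)) ((1, 1) : ZMod n × ZMod n)]
    apply Finset.sum_congr rfl
    intro p _
    have hp : p - ((1, 1) : ZMod n × ZMod n) = (p.1 - 1, p.2 - 1) := by ext <;> simp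
    rw [hp]
    simp [mul_comm]
  have swap2 : (∑ p : ZMod n × ZMod n, D p * E (p.1 - 1, p.2 + 1))
      = ∑ p : ZMod n × ZMod n, E p * D (p.1 + 1, p.2 - 1) := by
    rw [← shift_pair (fun q => E q * D (q.1 + 1, q.2 - 1)) ((1, -1) : ZMod n × ZMod n)]
    apply Finset.sum_congr rfl
    intro p _
    have hp : p - ((1, -1) : ZMod n × ZMod n) = (p.1 - 1, p.2 + 1) := by
      ext <;> simp [sub_neg_eq_add]
    rw [hp]
    simp [mul_comm]
  have swap3 : (∑ p : ZMod n × ZMod n, D p * E (p.1 + 1, p.2 - 1))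
      = ∑ p : ZMod n × ZMod n, E p * D (p.1 - 1, p.2 + 1) := by
    rw [← shift_pair (fun q => E q * D (q.1 - 1, q.2 + 1)) ((-1, 1) : ZMod n × ZMod n)]
    apply Finset.sum_congr rfl
    intro p _
    have hp : p - ((-1, 1) : ZMod n × ZMod n) = (p.1 + 1, p.2 - 1) := by
      ext <;> simp [sub_neg_eq_add]
    rw [hp]
    simp [mul_comm]
  have swap4 : (∑ p : ZMod n × ZMod n, D p * E (p.1 + 1, p.2 + 1))
      = ∑ p : ZMod n × ZMod n, E p * D (p.1 - 1, p.2 - 1) := by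
    rw [← shift_pair (fun q => E q * D (q.1 - 1, q.2 - 1)) ((-1, -1) : ZMod n × ZMod n)]
    apply Finset.sum_congr rfl
    intro p _
    have hp : p - ((-1, -1) : ZMod n × ZMod n) = (p.1 + 1, p.2 + 1) := by
      ext <;> simp [sub_neg_eq_add]
    rw [hp]
    simp [mul_comm]
  linarith [swap1, swap2, swap3, swap4]

lemma Qs_eq_sum (ρ : Equiv.Perm (ZMod n)) (E : ZMod n × ZMod n → ℤ) :
    Qs ρ E = ∑ p : ZMod n × ZMod n, genInd ρ p * corner E p := by
  rw [Fintype.sum_prod_type_right]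
  unfold Qs
  apply Finset.sum_congr rfl
  intro b _
  rw [Finset.sum_eq_single (ρ b)]
  · simp [genInd]
  · intro a _ ha
    simp only [genInd]
    rw [if_neg (fun h => ha h.symm)]
    ring
  · intro h; exact absurd (Finset.mem_univ _) h

lemma Qs_sub (σ τ : Equiv.Perm (ZMod n)) (E : ZMod n × ZMod n → ℤ) :
    Qs σ E - Qs τ E = ∑ p : ZMod n × ZMod n, mixedDiff (can σ τ) p * corner E p := by
  rw [Qs_eq_sum σ E, Qs_eq_sum τ E, ← Finset.sum_sub_distrib]
  exact Finset.sum_congr rfl fun p _ => by rw [connects_can σ τ p]; ring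

end Adjoint

lemma Qs_add (π : Equiv.Perm (ZMod n)) (A B : ZMod n × ZMod n → ℤ) :
    Qs π (fun p => A p + B p) = Qs π A + Qs π B := by
  unfold Qs
  rw [← Finset.sum_add_distrib]
  exact Finset.sum_congr rfl fun b _ => by simp only [corner]; ring

lemma Wmult_add (Γ : GridDiagram n) (A B : ZMod n × ZMod n → ℤ) :
    Wmult Γ (fun p => A p + B p) = Wmult Γ A + Wmult Γ B := by
  unfold Wmult
  rw [← Finset.sum_add_distrib]

lemma ival_indep (Γ : GridDiagram n) {σ τ : Equiv.Perm (ZMod n)} {D : ZMod n × ZMod n → ℤ}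
    (hD : Connects D σ τ) : ival Γ σ τ D = ival Γ σ τ (can σ τ) := by
  have hE : ∀ p, mixedDiff (fun q => D q - can σ τ q) p = 0 := by
    intro p
    have h1 : mixedDiff (fun q => D q - can σ τ q) p
        = mixedDiff D p - mixedDiff (can σ τ) p := by
      simp only [mixedDiff]; ring
    rw [h1, hD p, connects_can σ τ p]
    ring
  have hfun : D = fun p => can σ τ p + (D p - can σ τ p) := funext fun p => by ring
  rw [hfun]
  unfold ival
  rw [Qs_add, Qs_add, Wmult_add, qs_kernel Γ hE σ, qs_kernel Γ hE τ]
  ring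

lemma cocycle (Γ : GridDiagram n) (σ τ ρ : Equiv.Perm (ZMod n)) :
    ival Γ σ ρ (can σ ρ) = ival Γ σ τ (can σ τ) + ival Γ τ ρ (can τ ρ) := by
  have hsum : can σ ρ = fun p => can σ τ p + can τ ρ p := funext fun p => by
    simp only [can]; ring
  have hx : Qs σ (can τ ρ) - Qs τ (can τ ρ) = Qs τ (can σ τ) - Qs ρ (can σ τ) := by
    rw [Qs_sub σ τ (can τ ρ), Qs_sub τ ρ (can σ τ)]
    exact sum_adjoint (can σ τ) (can τ ρ)
  unfold ival
  rw [hsum, Qs_add, Qs_add, Wmult_add]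
  linarith

section Rect

lemma cyc_step {a₁ a₂ : ZMod n} (h : a₁ ≠ a₂) (a : ZMod n) :
    ((if inCyc a₁ a₂ a then (1 : ℤ) else 0) - (if inCyc a₁ a₂ (a - 1) then 1 else 0))
      = (if a₁ = a then 1 else 0) - (if a₂ = a then 1 else 0) := by
  have e1 : a - 1 - a₁ = a - a₁ - 1 := by ring
  have hkn : (a₂ - a₁).val < n := ZMod.val_lt _
  have hk0 : (a₂ - a₁).val ≠ 0 := by
    rw [Ne, ZMod.val_eq_zero, sub_eq_zero]
    exact fun hh => h hh.symm
  have hxn : (a - a₁).val < n := ZMod.val_lt _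
  have heq1 : (a₁ = a) ↔ (a - a₁).val = 0 := by
    rw [ZMod.val_eq_zero, sub_eq_zero]
    exact ⟨fun hh => hh.symm, fun hh => hh.symm⟩
  have heq2 : (a₂ = a) ↔ (a - a₁).val = (a₂ - a₁).val := by
    constructor
    · rintro rfl; rfl
    · intro hv
      exact (sub_left_inj.mp (val_inj hv)).symm
  simp only [inCyc, e1, heq1, heq2, val_sub_one (a - a₁), sub_eq_zero]
  by_cases h0 : a = a₁
  · rw [if_pos h0]
    have hv0 : (a - a₁).val = 0 := by rw [h0, sub_self, ZMod.val_zero]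
    rw [hv0]
    split_ifs <;> omega
  · rw [if_neg h0]
    have hv0 : (a - a₁).val ≠ 0 := by
      rw [Ne, ZMod.val_eq_zero, sub_eq_zero]; exact h0
    split_ifs <;> omega

lemma mixedDiff_rect {a₁ a₂ r₁ r₂ : ZMod n} (ha : a₁ ≠ a₂) (hr : r₁ ≠ r₂)
    (p : ZMod n × ZMod n) :
    mixedDiff (rectInd ((a₁, a₂), (r₁, r₂))) p
      = ((if a₁ = p.1 then (1 : ℤ) else 0) - (if a₂ = p.1 then 1 else 0))
        * ((if r₁ = p.2 then (1 : ℤ) else 0) - (if r₂ = p.2 then 1 else 0)) := by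
  obtain ⟨a, b⟩ := p
  simp only [mixedDiff, rectInd]
  rw [ite_mul_ite, ite_mul_ite, ite_mul_ite, ite_mul_ite]
  have hfact : ∀ X X' Y Y' : ℤ,
      X * Y - X' * Y - X * Y' + X' * Y' = (X - X') * (Y - Y') := fun _ _ _ _ => by ring
  rw [hfact, cyc_step ha a, cyc_step hr b]

lemma connects_rect (σ : Equiv.Perm (ZMod n)) {r₁ r₂ : ZMod n} (hr : r₁ ≠ r₂) :
    Connects (rectInd ((σ r₁, σ r₂), (r₁, r₂))) σ (σ * Equiv.swap r₁ r₂) := by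
  intro p
  obtain ⟨a, b⟩ := p
  have ha : σ r₁ ≠ σ r₂ := fun h => hr (σ.injective h)
  rw [mixedDiff_rect ha hr (a, b)]
  simp only [genInd, Equiv.Perm.mul_apply]
  rcases eq_or_ne b r₁ with h1 | h1
  · subst h1
    simp only [Equiv.swap_apply_left, if_true]
    rw [if_neg (fun hh : r₂ = b => hr hh.symm)]
    ring
  rcases eq_or_ne b r₂ with h4 | h4
  · subst h4
    simp only [Equiv.swap_apply_right, if_true]
    rw [if_neg (fun hh : r₁ = b => h1 hh.symm)]
    ring
  · simp only [Equiv.swap_apply_of_ne_of_ne h1 h4]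
    rw [if_neg (fun hh : r₁ = b => h1 hh.symm), if_neg (fun hh : r₂ = b => h4 hh.symm)]
    ring

lemma corner_rect (a₁ a₂ r₁ r₂ : ZMod n) (p : ZMod n × ZMod n) :
    corner (rectInd ((a₁, a₂), (r₁, r₂))) p
      = ((if inCyc a₁ a₂ p.1 then (1 : ℤ) else 0) + (if inCyc a₁ a₂ (p.1 - 1) then 1 else 0))
        * ((if inCyc r₁ r₂ p.2 then (1 : ℤ) else 0)
            + (if inCyc r₁ r₂ (p.2 - 1) then 1 else 0)) := by
  obtain ⟨a, b⟩ := p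
  simp only [corner, rectInd]
  rw [ite_mul_ite, ite_mul_ite, ite_mul_ite, ite_mul_ite]
  ring

lemma u_at_left {a₁ a₂ : ZMod n} (h : a₁ ≠ a₂) :
    ((if inCyc a₁ a₂ a₁ then (1 : ℤ) else 0) + (if inCyc a₁ a₂ (a₁ - 1) then 1 else 0)) = 1 := by
  have hs := cyc_step h a₁
  rw [if_pos rfl, if_neg (fun hh : a₂ = a₁ => h hh.symm)] at hs
  split_ifs at hs ⊢ <;> omega

lemma u_at_right {a₁ a₂ : ZMod n} (h : a₁ ≠ a₂) :
    ((if inCyc a₁ a₂ a₂ then (1 : ℤ) else 0) + (if inCyc a₁ a₂ (a₂ - 1) then 1 else 0)) = 1 := by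
  have hs := cyc_step h a₂
  rw [if_neg h, if_pos rfl] at hs
  split_ifs at hs ⊢ <;> omega

lemma u_even {a₁ a₂ : ZMod n} (h : a₁ ≠ a₂) (a : ZMod n) (h1 : a ≠ a₁) (h2 : a ≠ a₂) :
    ((if inCyc a₁ a₂ a then (1 : ℤ) else 0) + (if inCyc a₁ a₂ (a - 1) then 1 else 0))
      = 2 * (if inCyc a₁ a₂ a then (1 : ℤ) else 0) := by
  have hs := cyc_step h a
  rw [if_neg (fun hh : a₁ = a => h1 hh.symm), if_neg (fun hh : a₂ = a => h2 hh.symm)] at hs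
  split_ifs at hs ⊢ <;> omega

lemma rect_qs_dvd (σ : Equiv.Perm (ZMod n)) {r₁ r₂ : ZMod n} (hr : r₁ ≠ r₂) :
    (4 : ℤ) ∣ Qs σ (rectInd ((σ r₁, σ r₂), (r₁, r₂)))
      + Qs (σ * Equiv.swap r₁ r₂) (rectInd ((σ r₁, σ r₂), (r₁, r₂))) := by
  have ha : σ r₁ ≠ σ r₂ := fun h => hr (σ.injective h)
  set τ := σ * Equiv.swap r₁ r₂ with hτ
  set D := rectInd ((σ r₁, σ r₂), (r₁, r₂)) with hD
  have hsplit : Qs σ D + Qs τ D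
      = (∑ b ∈ ({r₁, r₂} : Finset (ZMod n)), (corner D (σ b, b) + corner D (τ b, b)))
        + ∑ b ∈ ({r₁, r₂} : Finset (ZMod n))ᶜ, (corner D (σ b, b) + corner D (τ b, b)) := by
    rw [Finset.sum_add_sum_compl]
    unfold Qs
    rw [← Finset.sum_add_distrib]
  rw [hsplit]
  apply dvd_add
  · have ht1 : τ r₁ = σ r₂ := by rw [hτ]; simp [Equiv.swap_apply_left]
    have ht2 : τ r₂ = σ r₁ := by rw [hτ]; simp [Equiv.swap_apply_right]
    rw [Finset.sum_pair hr, ht1, ht2]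
    have c11 : corner D (σ r₁, r₁) = 1 := by
      rw [hD, corner_rect]
      rw [show ((σ r₁, r₁) : (ZMod n) × ZMod n).1 = σ r₁ from rfl]
      rw [show ((σ r₁, r₁) : (ZMod n) × ZMod n).2 = r₁ from rfl]
      rw [u_at_left ha, u_at_left hr, mul_one]
    have c21 : corner D (σ r₂, r₁) = 1 := by
      rw [hD, corner_rect]
      rw [show ((σ r₂, r₁) : (ZMod n) × ZMod n).1 = σ r₂ from rfl]
      rw [show ((σ r₂, r₁) : (ZMod n) × ZMod n).2 = r₁ from rfl]
      rw [u_at_right ha, u_at_left hr, mul_one]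
    have c22 : corner D (σ r₂, r₂) = 1 := by
      rw [hD, corner_rect]
      rw [show ((σ r₂, r₂) : (ZMod n) × ZMod n).1 = σ r₂ from rfl]
      rw [show ((σ r₂, r₂) : (ZMod n) × ZMod n).2 = r₂ from rfl]
      rw [u_at_right ha, u_at_right hr, mul_one]
    have c12 : corner D (σ r₁, r₂) = 1 := by
      rw [hD, corner_rect]
      rw [show ((σ r₁, r₂) : (ZMod n) × ZMod n).1 = σ r₁ from rfl]
      rw [show ((σ r₁, r₂) : (ZMod n) × ZMod n).2 = r₂ from rfl]
      rw [u_at_left ha, u_at_right hr, mul_one]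
    rw [c11, c21, c22, c12]
    norm_num
  · apply Finset.dvd_sum
    intro b hb
    have hb' : b ≠ r₁ ∧ b ≠ r₂ := by
      simpa [not_or] using Finset.mem_compl.mp hb
    have hτb : τ b = σ b := by
      rw [hτ]; simp [Equiv.swap_apply_of_ne_of_ne hb'.1 hb'.2]
    rw [hτb]
    have hcb : corner D (σ b, b)
        = ((if inCyc (σ r₁) (σ r₂) (σ b) then (1 : ℤ) else 0)
            + (if inCyc (σ r₁) (σ r₂) (σ b - 1) then 1 else 0))
          * (2 * (if inCyc r₁ r₂ b then (1 : ℤ) else 0)) := by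
      rw [hD, corner_rect, ← u_even hr b hb'.1 hb'.2]
    refine ⟨((if inCyc (σ r₁) (σ r₂) (σ b) then (1 : ℤ) else 0)
        + (if inCyc (σ r₁) (σ r₂) (σ b - 1) then 1 else 0))
          * (if inCyc r₁ r₂ b then (1 : ℤ) else 0), ?_⟩
    rw [hcb]
    ring

lemma ival_rect_dvd (Γ : GridDiagram n) (σ : Equiv.Perm (ZMod n)) {r₁ r₂ : ZMod n}
    (hr : r₁ ≠ r₂) :
    (4 : ℤ) ∣ ival Γ σ (σ * Equiv.swap r₁ r₂) (rectInd ((σ r₁, σ r₂), (r₁, r₂))) := by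
  unfold ival
  exact dvd_sub (rect_qs_dvd σ hr) ⟨2 * Wmult Γ (rectInd ((σ r₁, σ r₂), (r₁, r₂))), by ring⟩

end Rect

lemma ival_self (Γ : GridDiagram n) (σ : Equiv.Perm (ZMod n)) :
    ival Γ σ σ (can σ σ) = 0 := by
  have hcan : can σ σ = fun _ => (0 : ℤ) := funext fun p => sub_self _
  rw [hcan]
  simp [ival, Qs, corner, Wmult]

lemma ival_can_dvd (Γ : GridDiagram n) (σ : Equiv.Perm (ZMod n)) :
    (4 : ℤ) ∣ ival Γ σ Γ.O (can σ Γ.O) := by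
  have main : ∀ π : Equiv.Perm (ZMod n),
      (4 : ℤ) ∣ ival Γ (Γ.O * π) Γ.O (can (Γ.O * π) Γ.O) := by
    intro π
    refine Equiv.Perm.swap_induction_on' π ?_ ?_
    · rw [mul_one, ival_self]
      exact dvd_zero 4
    · intro x y z hyz ih
      have hassoc : Γ.O * (x * Equiv.swap y z) = (Γ.O * x) * Equiv.swap y z :=
        (mul_assoc _ _ _).symm
      rw [hassoc]
      have hback : ((Γ.O * x) * Equiv.swap y z) * Equiv.swap y z = Γ.O * x := by
        rw [mul_assoc, Equiv.swap_mul_self, mul_one]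
      have hco := cocycle Γ ((Γ.O * x) * Equiv.swap y z) (Γ.O * x) Γ.O
      rw [hco]
      refine dvd_add ?_ ih
      have hcon := connects_rect ((Γ.O * x) * Equiv.swap y z) hyz
      rw [hback] at hcon
      rw [← ival_indep Γ hcon]
      have hd := ival_rect_dvd Γ ((Γ.O * x) * Equiv.swap y z) hyz
      rwa [hback] at hd
  have h := main (Γ.O⁻¹ * σ)
  rwa [mul_inv_cancel_left] at h

lemma Pgen_eq (σ : Equiv.Perm (ZMod n)) (D : ZMod n × ZMod n → ℤ) :
    Pgen σ D = ((Qs σ D : ℤ) : ℚ) / 4 := by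
  simp only [Pgen, locMult, Qs, corner]
  push_cast
  rw [Finset.sum_div]

lemma value_eq (Γ : GridDiagram n) (σ τ : Equiv.Perm (ZMod n)) (D : ZMod n × ZMod n → ℤ) :
    Pgen σ D + Pgen τ D - 2 * (Wmult Γ D : ℚ) = ((ival Γ σ τ D : ℤ) : ℚ) / 4 := by
  rw [Pgen_eq, Pgen_eq]
  unfold ival
  push_cast
  ring

end MG

/-- There is a unique Maslov grading `M` on the generators of a grid
diagram, i.e. a unique function `M` to `ℤ` with `M(x₀) = 1 − n` for the generator `x₀`
with point set `{(O(b), b)}`, and `M(x) − M(y) = P_x(D) + P_y(D) − 2·W(D)` whenever a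
2-chain `D` connects `x` to `y`. -/
theorem maslov_grading_exists_unique (n : ℕ) [NeZero n] (hn : 2 ≤ n)
    (Γ : GridDiagram n) :
    ∃! M : Equiv.Perm (ZMod n) → ℤ,
      M Γ.O = 1 - (n : ℤ) ∧
      ∀ (σ τ : Equiv.Perm (ZMod n)) (D : ZMod n × ZMod n → ℤ), Connects D σ τ →
        (M σ : ℚ) - (M τ : ℚ) = Pgen σ D + Pgen τ D - 2 * (Wmult Γ D : ℚ) := by
  refine ⟨fun σ => 1 - (n : ℤ) + MG.ival Γ σ Γ.O (MG.can σ Γ.O) / 4, ⟨?_, ?_⟩, ?_⟩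
  · show 1 - (n : ℤ) + MG.ival Γ Γ.O Γ.O (MG.can Γ.O Γ.O) / 4 = 1 - (n : ℤ)
    rw [MG.ival_self Γ Γ.O]
    norm_num
  · intro σ τ D hD
    obtain ⟨k, hk⟩ := MG.ival_can_dvd Γ σ
    obtain ⟨l, hl⟩ := MG.ival_can_dvd Γ τ
    have hco := MG.cocycle Γ σ τ Γ.O
    have hDind := MG.ival_indep Γ hD
    have hval := MG.value_eq Γ σ τ D
    rw [hval, hDind]
    have hστ : MG.ival Γ σ τ (MG.can σ τ) = 4 * k - 4 * l := by omega
    rw [hστ]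
    show ((1 - (n : ℤ) + MG.ival Γ σ Γ.O (MG.can σ Γ.O) / 4 : ℤ) : ℚ)
        - ((1 - (n : ℤ) + MG.ival Γ τ Γ.O (MG.can τ Γ.O) / 4 : ℤ) : ℚ)
        = ((4 * k - 4 * l : ℤ) : ℚ) / 4
    have hdσ : MG.ival Γ σ Γ.O (MG.can σ Γ.O) / 4 = k := by omega
    have hdτ : MG.ival Γ τ Γ.O (MG.can τ Γ.O) / 4 = l := by omega
    rw [hdσ, hdτ]
    push_cast
    ring
  · intro M' hM'
    obtain ⟨hO, hrel⟩ := hM'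
    funext σ
    obtain ⟨k, hk⟩ := MG.ival_can_dvd Γ σ
    have h1 := hrel σ Γ.O (MG.can σ Γ.O) (MG.connects_can σ Γ.O)
    rw [MG.value_eq Γ σ Γ.O (MG.can σ Γ.O), hO, hk] at h1
    have hq : ((4 * k : ℤ) : ℚ) / 4 = (k : ℚ) := by push_cast; ring
    rw [hq] at h1
    have hdσ : MG.ival Γ σ Γ.O (MG.can σ Γ.O) / 4 = k := by omega
    show M' σ = 1 - (n : ℤ) + MG.ival Γ σ Γ.O (MG.can σ Γ.O) / 4
    rw [hdσ]
    have h2 : (M' σ : ℚ) = ((1 - (n : ℤ) + k : ℤ) : ℚ) := by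
      push_cast at h1 ⊢
      linarith
    exact_mod_cast h2
end

section
/- (Admissibility of grid diagrams.) Let Γ be a grid diagram of size n with white-dot permutation O, and let u, v : ZMod n → ℤ be such that the 2-chain D(a,b) = v(a) + u(b) has zero multiplicity at every white dot, i.e. v(O(b)) + u(b) = 0 for every b ∈ ZMod n. If D is not identically zero, then D attains both a positive value and a negative value; that is, every non-trivial periodic domain of the grid diagram has both positive and negative local multiplicities. -/
open Finset

variable {n : ℕ}

/-- **Admissibility of grid diagrams.** If the periodic domain
`D(a,b) = v(a) + u(b)` has zero multiplicity at every white dot and is not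
identically zero, then it attains both a positive and a negative value. -/
theorem grid_diagram_admissible (n : ℕ) [NeZero n] (hn : 2 ≤ n)
    (Γ : GridDiagram n) (u v : ZMod n → ℤ)
    (hW : ∀ b : ZMod n, v (Γ.O b) + u b = 0)
    (hne : ∃ a b : ZMod n, v a + u b ≠ 0) :
    (∃ a b : ZMod n, 0 < v a + u b) ∧ (∃ a b : ZMod n, v a + u b < 0) := by
  have hv : ∀ a : ZMod n, v a = -u (Γ.O.symm a) := by
    intro a
    have := hW (Γ.O.symm a)
    rw [Equiv.apply_symm_apply] at this
    omega
  obtain ⟨a, b, h⟩ := hne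
  rw [hv a] at h
  rcases lt_or_gt_of_ne h with hlt | hgt
  · refine ⟨⟨Γ.O b, Γ.O.symm a, ?_⟩, ⟨a, b, ?_⟩⟩
    · rw [hv (Γ.O b), Equiv.symm_apply_apply]; omega
    · rw [hv a]; omega
  · refine ⟨⟨a, b, ?_⟩, ⟨Γ.O b, Γ.O.symm a, ?_⟩⟩
    · rw [hv a]; omega
    · rw [hv (Γ.O b), Equiv.symm_apply_apply]; omega
end

section
/- (Additivity of the combinatorial Maslov index under juxtaposition.) Let Γ be a grid diagram of size n, let x, y, z be generators, let D₁ be a 2-chain connecting x to y and D₂ a 2-chain connecting y to z. Then P_x(D₂) − P_y(D₂) = P_y(D₁) − P_z(D₁). Consequently, P_x(D₁ + D₂) + P_z(D₁ + D₂) = (P_x(D₁) + P_y(D₁)) + (P_y(D₂) + P_z(D₂)). -/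
open Finset

variable {n : ℕ}

section MaslovAux

variable {n : ℕ} [NeZero n]

private lemma sum_shift_aux (f : ZMod n × ZMod n → ℚ) (c d : ZMod n) :
    ∑ p : ZMod n × ZMod n, f (p.1 + c, p.2 + d) = ∑ p : ZMod n × ZMod n, f p :=
  Fintype.sum_bijective (fun p : ZMod n × ZMod n => (p.1 + c, p.2 + d))
    ((Equiv.prodCongr (Equiv.addRight c) (Equiv.addRight d)).bijective)
    _ _ (fun _ => rfl)

private lemma sum_shift' (f g : ZMod n × ZMod n → ℚ) (c d : ZMod n)
    (h : ∀ p : ZMod n × ZMod n, g p = f (p.1 + c, p.2 + d)) :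
    ∑ p : ZMod n × ZMod n, g p = ∑ p : ZMod n × ZMod n, f p := by
  calc ∑ p : ZMod n × ZMod n, g p = ∑ p : ZMod n × ZMod n, f (p.1 + c, p.2 + d) :=
        Finset.sum_congr rfl (fun p _ => h p)
    _ = ∑ p : ZMod n × ZMod n, f p := sum_shift_aux f c d

/-- The combinatorial pairing written via `D` on the left. -/
private lemma pairing_eq (D E : ZMod n × ZMod n → ℤ) :
    ∑ p : ZMod n × ZMod n, (mixedDiff D p : ℚ) * locMult E p
      = (1/4) * ∑ p : ZMod n × ZMod n, (D p : ℚ) *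
          ((E (p.1 - 1, p.2 - 1) : ℚ) - (E (p.1 + 1, p.2 - 1) : ℚ)
            - (E (p.1 - 1, p.2 + 1) : ℚ) + (E (p.1 + 1, p.2 + 1) : ℚ)) := by
  set S : ZMod n × ZMod n → ℚ := fun p =>
    (E p : ℚ) + (E (p.1 - 1, p.2) : ℚ) + (E (p.1, p.2 - 1) : ℚ) + (E (p.1 - 1, p.2 - 1) : ℚ)
    with hS
  have step1 : ∑ p : ZMod n × ZMod n, (mixedDiff D p : ℚ) * locMult E p
      = (1/4) * ((∑ p : ZMod n × ZMod n, (D p : ℚ) * S p)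
          - (∑ p : ZMod n × ZMod n, (D (p.1 - 1, p.2) : ℚ) * S p)
          - (∑ p : ZMod n × ZMod n, (D (p.1, p.2 - 1) : ℚ) * S p)
          + (∑ p : ZMod n × ZMod n, (D (p.1 - 1, p.2 - 1) : ℚ) * S p)) := by
    rw [← Finset.sum_sub_distrib, ← Finset.sum_sub_distrib, ← Finset.sum_add_distrib,
      Finset.mul_sum]
    refine Finset.sum_congr rfl (fun p _ => ?_)
    simp only [mixedDiff, locMult, hS]
    push_cast
    ring
  have s2 : ∑ p : ZMod n × ZMod n, (D (p.1 - 1, p.2) : ℚ) * S p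
      = ∑ p : ZMod n × ZMod n, (D p : ℚ) * S (p.1 + 1, p.2) := by
    refine sum_shift' _ _ (-1) 0 (fun p => ?_)
    rw [show p.1 + (-1 : ZMod n) = p.1 - 1 from by ring, show p.2 + (0 : ZMod n) = p.2 from by ring,
      show p.1 - 1 + 1 = p.1 from by ring]
  have s3 : ∑ p : ZMod n × ZMod n, (D (p.1, p.2 - 1) : ℚ) * S p
      = ∑ p : ZMod n × ZMod n, (D p : ℚ) * S (p.1, p.2 + 1) := by
    refine sum_shift' _ _ 0 (-1) (fun p => ?_)
    rw [show p.2 + (-1 : ZMod n) = p.2 - 1 from by ring, show p.1 + (0 : ZMod n) = p.1 from by ring,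
      show p.2 - 1 + 1 = p.2 from by ring]
  have s4 : ∑ p : ZMod n × ZMod n, (D (p.1 - 1, p.2 - 1) : ℚ) * S p
      = ∑ p : ZMod n × ZMod n, (D p : ℚ) * S (p.1 + 1, p.2 + 1) := by
    refine sum_shift' _ _ (-1) (-1) (fun p => ?_)
    rw [show p.1 + (-1 : ZMod n) = p.1 - 1 from by ring, show p.2 + (-1 : ZMod n) = p.2 - 1 from by ring,
      show p.1 - 1 + 1 = p.1 from by ring, show p.2 - 1 + 1 = p.2 from by ring]
  rw [step1, s2, s3, s4, ← Finset.sum_sub_distrib, ← Finset.sum_sub_distrib,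
    ← Finset.sum_add_distrib]
  congr 1
  refine Finset.sum_congr rfl (fun p _ => ?_)
  simp only [hS, add_sub_cancel_right]
  ring

/-- Symmetry of the pairing. -/
private lemma pairing_symm (D E : ZMod n × ZMod n → ℤ) :
    ∑ p : ZMod n × ZMod n, (mixedDiff D p : ℚ) * locMult E p
      = ∑ p : ZMod n × ZMod n, (mixedDiff E p : ℚ) * locMult D p := by
  rw [pairing_eq D E, pairing_eq E D]
  congr 1
  have e1 : ∑ p : ZMod n × ZMod n, (D p : ℚ) * (E (p.1 - 1, p.2 - 1) : ℚ)
      = ∑ p : ZMod n × ZMod n, (E p : ℚ) * (D (p.1 + 1, p.2 + 1) : ℚ) := by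
    refine sum_shift' _ _ (-1) (-1) (fun p => ?_)
    rw [show p.1 + (-1 : ZMod n) = p.1 - 1 from by ring,
      show p.2 + (-1 : ZMod n) = p.2 - 1 from by ring,
      show p.1 - 1 + 1 = p.1 from by ring, show p.2 - 1 + 1 = p.2 from by ring]
    ring
  have e2 : ∑ p : ZMod n × ZMod n, (D p : ℚ) * (E (p.1 + 1, p.2 - 1) : ℚ)
      = ∑ p : ZMod n × ZMod n, (E p : ℚ) * (D (p.1 - 1, p.2 + 1) : ℚ) := by
    refine sum_shift' _ _ 1 (-1) (fun p => ?_)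
    rw [show p.2 + (-1 : ZMod n) = p.2 - 1 from by ring,
      show p.1 + 1 - 1 = p.1 from by ring, show p.2 - 1 + 1 = p.2 from by ring]
    ring
  have e3 : ∑ p : ZMod n × ZMod n, (D p : ℚ) * (E (p.1 - 1, p.2 + 1) : ℚ)
      = ∑ p : ZMod n × ZMod n, (E p : ℚ) * (D (p.1 + 1, p.2 - 1) : ℚ) := by
    refine sum_shift' _ _ (-1) 1 (fun p => ?_)
    rw [show p.1 + (-1 : ZMod n) = p.1 - 1 from by ring,
      show p.1 - 1 + 1 = p.1 from by ring, show p.2 + 1 - 1 = p.2 from by ring]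
    ring
  have e4 : ∑ p : ZMod n × ZMod n, (D p : ℚ) * (E (p.1 + 1, p.2 + 1) : ℚ)
      = ∑ p : ZMod n × ZMod n, (E p : ℚ) * (D (p.1 - 1, p.2 - 1) : ℚ) := by
    refine sum_shift' _ _ 1 1 (fun p => ?_)
    rw [show p.1 + 1 - 1 = p.1 from by ring, show p.2 + 1 - 1 = p.2 from by ring]
    ring
  calc ∑ p : ZMod n × ZMod n, (D p : ℚ) *
        ((E (p.1 - 1, p.2 - 1) : ℚ) - (E (p.1 + 1, p.2 - 1) : ℚ)
          - (E (p.1 - 1, p.2 + 1) : ℚ) + (E (p.1 + 1, p.2 + 1) : ℚ))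
      = (∑ p : ZMod n × ZMod n, (D p : ℚ) * (E (p.1 - 1, p.2 - 1) : ℚ))
        - (∑ p : ZMod n × ZMod n, (D p : ℚ) * (E (p.1 + 1, p.2 - 1) : ℚ))
        - (∑ p : ZMod n × ZMod n, (D p : ℚ) * (E (p.1 - 1, p.2 + 1) : ℚ))
        + (∑ p : ZMod n × ZMod n, (D p : ℚ) * (E (p.1 + 1, p.2 + 1) : ℚ)) := by
        rw [← Finset.sum_sub_distrib, ← Finset.sum_sub_distrib, ← Finset.sum_add_distrib]
        exact Finset.sum_congr rfl (fun p _ => by ring)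
    _ = (∑ p : ZMod n × ZMod n, (E p : ℚ) * (D (p.1 + 1, p.2 + 1) : ℚ))
        - (∑ p : ZMod n × ZMod n, (E p : ℚ) * (D (p.1 - 1, p.2 + 1) : ℚ))
        - (∑ p : ZMod n × ZMod n, (E p : ℚ) * (D (p.1 + 1, p.2 - 1) : ℚ))
        + (∑ p : ZMod n × ZMod n, (E p : ℚ) * (D (p.1 - 1, p.2 - 1) : ℚ)) := by
        rw [e1, e2, e3, e4]
    _ = ∑ p : ZMod n × ZMod n, (E p : ℚ) *
        ((D (p.1 - 1, p.2 - 1) : ℚ) - (D (p.1 + 1, p.2 - 1) : ℚ)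
          - (D (p.1 - 1, p.2 + 1) : ℚ) + (D (p.1 + 1, p.2 + 1) : ℚ)) := by
        rw [← Finset.sum_sub_distrib, ← Finset.sum_sub_distrib, ← Finset.sum_add_distrib]
        exact Finset.sum_congr rfl (fun p _ => by ring)

private lemma genInd_pair (σ : Equiv.Perm (ZMod n)) (E : ZMod n × ZMod n → ℤ) :
    ∑ p : ZMod n × ZMod n, ((genInd σ p : ℤ) : ℚ) * locMult E p = Pgen σ E := by
  rw [Pgen, Fintype.sum_prod_type, Finset.sum_comm]
  refine Finset.sum_congr rfl (fun b _ => ?_)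
  simp [genInd, ite_mul, Finset.sum_ite_eq]

private lemma Pgen_add (σ : Equiv.Perm (ZMod n)) (D₁ D₂ : ZMod n × ZMod n → ℤ) :
    Pgen σ (fun p => D₁ p + D₂ p) = Pgen σ D₁ + Pgen σ D₂ := by
  rw [Pgen, Pgen, Pgen, ← Finset.sum_add_distrib]
  refine Finset.sum_congr rfl (fun b _ => ?_)
  simp only [locMult]
  push_cast
  ring

end MaslovAux

/-- **Additivity of the combinatorial Maslov index under juxtaposition.**
If `D₁` connects `x` to `y` and `D₂` connects `y` to `z`, then
`P_x(D₂) − P_y(D₂) = P_y(D₁) − P_z(D₁)`, and consequently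
`P_x(D₁+D₂) + P_z(D₁+D₂) = (P_x(D₁) + P_y(D₁)) + (P_y(D₂) + P_z(D₂))`. -/

theorem maslov_index_additive (n : ℕ) [NeZero n] (hn : 2 ≤ n)
    (Γ : GridDiagram n) (σ τ ρ : Equiv.Perm (ZMod n))
    (D₁ D₂ : ZMod n × ZMod n → ℤ)
    (h₁ : Connects D₁ σ τ) (h₂ : Connects D₂ τ ρ) :
    Pgen σ D₂ - Pgen τ D₂ = Pgen τ D₁ - Pgen ρ D₁ ∧
    Pgen σ (fun p => D₁ p + D₂ p) + Pgen ρ (fun p => D₁ p + D₂ p)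
      = (Pgen σ D₁ + Pgen τ D₁) + (Pgen τ D₂ + Pgen ρ D₂) := by
  have h1' : Pgen σ D₂ - Pgen τ D₂
      = ∑ p : ZMod n × ZMod n, (mixedDiff D₁ p : ℚ) * locMult D₂ p := by
    rw [← genInd_pair σ D₂, ← genInd_pair τ D₂, ← Finset.sum_sub_distrib]
    refine Finset.sum_congr rfl (fun p _ => ?_)
    rw [h₁ p]; push_cast; ring
  have h2' : Pgen τ D₁ - Pgen ρ D₁
      = ∑ p : ZMod n × ZMod n, (mixedDiff D₂ p : ℚ) * locMult D₁ p := by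
    rw [← genInd_pair τ D₁, ← genInd_pair ρ D₁, ← Finset.sum_sub_distrib]
    refine Finset.sum_congr rfl (fun p _ => ?_)
    rw [h₂ p]; push_cast; ring
  have first : Pgen σ D₂ - Pgen τ D₂ = Pgen τ D₁ - Pgen ρ D₁ := by
    rw [h1', h2', pairing_symm]
  refine ⟨first, ?_⟩
  rw [Pgen_add, Pgen_add]
  linarith [first]
end

section
/- (Relative Alexander grading via winding numbers.) Let Γ be a grid diagram of size n and let x, y be generators. For every 2-chain D connecting x to y, Σ_{p∈x} a(p) − Σ_{p∈y} a(p) = B(D) − W(D). Equivalently, with the Alexander grading A defined from the winding-number function a, A(x) − A(y) = B(D) − W(D) for every 2-chain D connecting x to y. -/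
open Finset

variable {n : ℕ}

section AuxWinding

variable [NeZero n] (Γ : GridDiagram n)

/-- Sign of column `j`. -/
private def epsA (j : ℕ) : ℤ :=
  if (Γ.X.symm (j : ZMod n)).val < (Γ.O.symm (j : ZMod n)).val then 1 else -1

/-- Row-interval indicator of column `j` at height `r`. -/
private def etaA (j r : ℕ) : ℤ :=
  if min (Γ.X.symm (j : ZMod n)).val (Γ.O.symm (j : ZMod n)).val < r ∧
      r ≤ max (Γ.X.symm (j : ZMod n)).val (Γ.O.symm (j : ZMod n)).val then 1 else 0

/-- Winding number as a function of natural-number coordinates. -/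
private def Fa (c r : ℕ) : ℤ := ∑ j ∈ Finset.range c, epsA Γ j * etaA Γ j r

private lemma windA_eq_Fa (p : ZMod n × ZMod n) : windA Γ p = Fa Γ p.1.val p.2.val := rfl

private lemma symm_ne (a : ZMod n) : (Γ.X.symm a).val ≠ (Γ.O.symm a).val := by
  intro h
  have h2 : Γ.X.symm a = Γ.O.symm a := ZMod.val_injective n h
  apply Γ.ne (Γ.X.symm a)
  rw [h2, Equiv.apply_symm_apply, ← h2, Equiv.apply_symm_apply]

private lemma sum_range_cast (f : ZMod n → ℤ) :
    ∑ j ∈ Finset.range n, f (j : ℕ) = ∑ b : ZMod n, f b := by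
  refine Finset.sum_nbij' (fun j => ((j : ℕ) : ZMod n)) (fun b => b.val) ?_ ?_ ?_ ?_ ?_
  · intro j _; exact Finset.mem_univ _
  · intro b _; exact Finset.mem_range.mpr (ZMod.val_lt b)
  · intro j hj; exact ZMod.val_cast_of_lt (Finset.mem_range.mp hj)
  · intro b _; exact ZMod.natCast_rightInverse b
  · intro j _; rfl

private lemma Fa_n (r : ℕ) : Fa Γ n r = 0 := by
  have hterm : ∀ j : ℕ, epsA Γ j * etaA Γ j r =
      (if (Γ.X.symm ((j : ℕ) : ZMod n)).val < r then (1 : ℤ) else 0)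
      - (if (Γ.O.symm ((j : ℕ) : ZMod n)).val < r then (1 : ℤ) else 0) := by
    intro j
    have hne := symm_ne Γ ((j : ℕ) : ZMod n)
    unfold epsA etaA
    split_ifs <;> omega
  have hsum : ∀ P : Equiv.Perm (ZMod n),
      (∑ j ∈ Finset.range n, (if (P.symm ((j : ℕ) : ZMod n)).val < r then (1 : ℤ) else 0))
      = ∑ b : ZMod n, (if b.val < r then (1 : ℤ) else 0) := by
    intro P
    rw [sum_range_cast (fun b => if (P.symm b).val < r then (1 : ℤ) else 0)]
    exact Equiv.sum_comp P.symm (fun b => if b.val < r then (1 : ℤ) else 0)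
  unfold Fa
  rw [Finset.sum_congr rfl (fun j _ => hterm j), Finset.sum_sub_distrib,
    hsum Γ.X, hsum Γ.O, sub_self]

private lemma deltaA (hn : 2 ≤ n) (p : ZMod n × ZMod n) :
    windA Γ p - windA Γ (p.1 + 1, p.2) - windA Γ (p.1, p.2 + 1)
      + windA Γ (p.1 + 1, p.2 + 1)
    = genInd Γ.X p - genInd Γ.O p := by
  obtain ⟨a, b⟩ := p
  have hv1 : (1 : ZMod n).val = 1 := by
    rw [ZMod.val_one_eq_one_mod, Nat.mod_eq_of_lt (by omega)]
  have hva : ∀ x : ZMod n, (x + 1).val = (x.val + 1) % n := by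
    intro x; rw [ZMod.val_add, hv1]
  have hrow : ∀ c : ℕ, Fa Γ c ((b + 1).val) = Fa Γ c (b.val + 1) := by
    intro c
    unfold Fa
    refine Finset.sum_congr rfl fun j _ => ?_
    have hx := ZMod.val_lt (Γ.X.symm ((j : ℕ) : ZMod n))
    have ho := ZMod.val_lt (Γ.O.symm ((j : ℕ) : ZMod n))
    have hb := ZMod.val_lt b
    have h1 := hva b
    unfold etaA
    rcases Nat.lt_or_ge (b.val + 1) n with h | h
    · rw [h1, Nat.mod_eq_of_lt h]
    · have hbn : b.val + 1 = n := by omega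
      rw [h1, hbn, Nat.mod_self]
      unfold epsA
      split_ifs <;> first | rfl | omega
  have hcol : ∀ r : ℕ, Fa Γ ((a + 1).val) r = Fa Γ (a.val + 1) r := by
    intro r
    have h1 := hva a
    have ha := ZMod.val_lt a
    rcases Nat.lt_or_ge (a.val + 1) n with h | h
    · rw [h1, Nat.mod_eq_of_lt h]
    · have han : a.val + 1 = n := by omega
      rw [h1, han, Nat.mod_self, Fa_n Γ r]
      simp [Fa]
  have e1 : windA Γ (a, b) = Fa Γ a.val b.val := rfl
  have e2 : windA Γ (a + 1, b) = Fa Γ (a.val + 1) b.val := by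
    rw [windA_eq_Fa]; exact hcol b.val
  have e3 : windA Γ (a, b + 1) = Fa Γ a.val (b.val + 1) := by
    rw [windA_eq_Fa]; exact hrow a.val
  have e4 : windA Γ (a + 1, b + 1) = Fa Γ (a.val + 1) (b.val + 1) := by
    rw [windA_eq_Fa]
    show Fa Γ ((a + 1).val) ((b + 1).val) = _
    rw [hcol, hrow]
  rw [e1, e2, e3, e4]
  unfold Fa
  rw [Finset.sum_range_succ, Finset.sum_range_succ]
  have hcast : ((a.val : ℕ) : ZMod n) = a := ZMod.natCast_rightInverse a
  have hXc : Γ.X b = a ↔ b.val = (Γ.X.symm a).val := by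
    constructor
    · intro h; rw [← h, Equiv.symm_apply_apply]
    · intro h
      have hb : b = Γ.X.symm a := ZMod.val_injective n h
      rw [hb, Equiv.apply_symm_apply]
  have hOc : Γ.O b = a ↔ b.val = (Γ.O.symm a).val := by
    constructor
    · intro h; rw [← h, Equiv.symm_apply_apply]
    · intro h
      have hb : b = Γ.O.symm a := ZMod.val_injective n h
      rw [hb, Equiv.apply_symm_apply]
  have hne := symm_ne Γ a
  have hb := ZMod.val_lt b
  have hx := ZMod.val_lt (Γ.X.symm a)
  have ho := ZMod.val_lt (Γ.O.symm a)
  unfold epsA etaA genInd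
  simp only [hcast]
  show _ = (if Γ.X b = a then (1 : ℤ) else 0) - (if Γ.O b = a then (1 : ℤ) else 0)
  simp only [hXc, hOc]
  split_ifs <;> omega

private lemma sum_by_parts (f g : ZMod n × ZMod n → ℤ) :
    ∑ p : ZMod n × ZMod n, f p * mixedDiff g p
    = ∑ p : ZMod n × ZMod n,
        (f p - f (p.1 + 1, p.2) - f (p.1, p.2 + 1) + f (p.1 + 1, p.2 + 1)) * g p := by
  have e1 : ∑ p : ZMod n × ZMod n, f (p.1 + 1, p.2) * g p
      = ∑ p : ZMod n × ZMod n, f p * g (p.1 - 1, p.2) := by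
    apply Fintype.sum_equiv ((Equiv.addRight (1 : ZMod n)).prodCongr (Equiv.refl (ZMod n)))
    intro ⟨x, y⟩
    simp [Equiv.prodCongr, add_sub_cancel_right]
  have e2 : ∑ p : ZMod n × ZMod n, f (p.1, p.2 + 1) * g p
      = ∑ p : ZMod n × ZMod n, f p * g (p.1, p.2 - 1) := by
    apply Fintype.sum_equiv ((Equiv.refl (ZMod n)).prodCongr (Equiv.addRight (1 : ZMod n)))
    intro ⟨x, y⟩
    simp [Equiv.prodCongr, add_sub_cancel_right]
  have e3 : ∑ p : ZMod n × ZMod n, f (p.1 + 1, p.2 + 1) * g p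
      = ∑ p : ZMod n × ZMod n, f p * g (p.1 - 1, p.2 - 1) := by
    apply Fintype.sum_equiv ((Equiv.addRight (1 : ZMod n)).prodCongr (Equiv.addRight (1 : ZMod n)))
    intro ⟨x, y⟩
    simp [Equiv.prodCongr, add_sub_cancel_right]
  simp only [mixedDiff, mul_sub, mul_add, sub_mul, add_mul,
    Finset.sum_add_distrib, Finset.sum_sub_distrib]
  rw [e1, e2, e3]

private lemma sum_genInd (f : ZMod n × ZMod n → ℤ) (π : Equiv.Perm (ZMod n)) :
    ∑ p : ZMod n × ZMod n, f p * genInd π p = ∑ b : ZMod n, f (π b, b) := by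
  rw [Fintype.sum_prod_type_right]
  refine Finset.sum_congr rfl fun b _ => ?_
  simp [genInd, mul_ite, mul_one, mul_zero, Finset.sum_ite_eq]

end AuxWinding

/-- **Relative Alexander grading via winding numbers.** For every
2-chain `D` connecting `x` to `y`, `Σ_{p∈x} a(p) − Σ_{p∈y} a(p) = B(D) − W(D)`;
equivalently, `A(x) − A(y) = B(D) − W(D)` for the Alexander grading `A` defined
from the winding-number function `a`. -/
theorem relative_alexander_grading (n : ℕ) [NeZero n] (hn : 2 ≤ n)
    (Γ : GridDiagram n) (σ τ : Equiv.Perm (ZMod n))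
    (D : ZMod n × ZMod n → ℤ) (hconn : Connects D σ τ) :
    (∑ b : ZMod n, windA Γ (σ b, b)) - (∑ b : ZMod n, windA Γ (τ b, b))
      = Bmult Γ D - Wmult Γ D ∧
    alexQ Γ σ - alexQ Γ τ = (Bmult Γ D : ℚ) - (Wmult Γ D : ℚ) := by
  have hL : ∑ p : ZMod n × ZMod n, windA Γ p * mixedDiff D p
      = (∑ b : ZMod n, windA Γ (σ b, b)) - (∑ b : ZMod n, windA Γ (τ b, b)) := by
    have hpt : ∀ p : ZMod n × ZMod n, windA Γ p * mixedDiff D p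
        = windA Γ p * genInd σ p - windA Γ p * genInd τ p := by
      intro p; rw [hconn p]; ring
    rw [Finset.sum_congr rfl fun p _ => hpt p, Finset.sum_sub_distrib,
      sum_genInd (windA Γ) σ, sum_genInd (windA Γ) τ]
  have hR : ∑ p : ZMod n × ZMod n,
        (windA Γ p - windA Γ (p.1 + 1, p.2) - windA Γ (p.1, p.2 + 1)
          + windA Γ (p.1 + 1, p.2 + 1)) * D p
      = Bmult Γ D - Wmult Γ D := by
    have hpt : ∀ p : ZMod n × ZMod n,
        (windA Γ p - windA Γ (p.1 + 1, p.2) - windA Γ (p.1, p.2 + 1)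
          + windA Γ (p.1 + 1, p.2 + 1)) * D p
        = D p * genInd Γ.X p - D p * genInd Γ.O p := by
      intro p; rw [deltaA Γ hn p]; ring
    rw [Finset.sum_congr rfl fun p _ => hpt p, Finset.sum_sub_distrib,
      sum_genInd D Γ.X, sum_genInd D Γ.O]
    rfl
  have h1 : (∑ b : ZMod n, windA Γ (σ b, b)) - (∑ b : ZMod n, windA Γ (τ b, b))
      = Bmult Γ D - Wmult Γ D := by
    rw [← hL, sum_by_parts, hR]
  refine ⟨h1, ?_⟩
  have h2 : ((∑ b : ZMod n, windA Γ (σ b, b) : ℤ) : ℚ)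
      - ((∑ b : ZMod n, windA Γ (τ b, b) : ℤ) : ℚ)
      = (Bmult Γ D : ℚ) - (Wmult Γ D : ℚ) := by exact_mod_cast h1
  unfold alexQ
  linarith [h2]
end
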